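/- arXiv:1510.03687 — 7 statements merged into one kernel-verified Lean document; each statement's English description precedes it below -/
import Mathlib

section
/- Let n ≥ 1, P > 0, and λ_p ≥ 0, and let p : ℝⁿ → ℝ be continuous with support contained in the closed ball of radius P centered at the origin. If the function x ↦ p(x) + (λ_p/2)‖x‖² is convex on ℝⁿ, then sup_{x ∈ ℝⁿ} |p(x)| ≤ 4·λ_p·P². -/
open Real

/-- **Remark 4.2.** A continuous function `p` supported in the closed ball of
radius `P` whose distributional Hessian is bounded below by `-λ_p·Id`
(encoded as convexity of `x ↦ p(x) + (λ_p/2)‖x‖²`) satisfies the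
dimension-free bound `‖p‖_∞ ≤ 4λ_p P²`. -/
theorem stmt_6 (n : ℕ) (hn : 1 ≤ n) (P lamp : ℝ) (hP : 0 < P)
    (hlamp : 0 ≤ lamp)
    (p : EuclideanSpace ℝ (Fin n) → ℝ) (hpcont : Continuous p)
    (hpsupp : Function.support p ⊆ Metric.closedBall 0 P)
    (hpconv : ConvexOn ℝ Set.univ (fun x => p x + lamp / 2 * ‖x‖ ^ 2)) :
    ∀ x, |p x| ≤ 4 * lamp * P ^ 2 := by
  have hp0 : ∀ y : EuclideanSpace ℝ (Fin n), P < ‖y‖ → p y = 0 := by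
    intro y hy
    by_contra h
    have hmem : y ∈ Metric.closedBall (0 : EuclideanSpace ℝ (Fin n)) P := hpsupp h
    rw [Metric.mem_closedBall, dist_zero_right] at hmem
    linarith
  intro x
  by_cases hx : ‖x‖ ≤ P
  · obtain ⟨u, hu1, hux⟩ : ∃ u : EuclideanSpace ℝ (Fin n),
      ‖u‖ = 1 ∧ (inner ℝ x u : ℝ) = ‖x‖ := by
      by_cases h0 : x = 0
      · refine ⟨EuclideanSpace.single ⟨0, hn⟩ (1 : ℝ), ?_, ?_⟩
        · simp [EuclideanSpace.norm_single]
        · simp [h0]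
      · refine ⟨‖x‖⁻¹ • x, ?_, ?_⟩
        · rw [norm_smul, norm_inv, norm_norm, inv_mul_cancel₀ (norm_ne_zero_iff.mpr h0)]
        · rw [real_inner_smul_right, real_inner_self_eq_norm_sq, pow_two,
            inv_mul_cancel_left₀ (norm_ne_zero_iff.mpr h0)]
    have hsq : ∀ t : ℝ, ‖x + t • u‖ ^ 2 = (‖x‖ + t) ^ 2 := by
      intro t
      rw [norm_add_sq_real, real_inner_smul_right, hux, norm_smul, hu1]
      have := sq_abs t
      simp only [Real.norm_eq_abs, mul_one]
      nlinarith [this]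
    have hnorm : ∀ t : ℝ, 0 ≤ ‖x‖ + t → ‖x + t • u‖ = ‖x‖ + t := by
      intro t ht
      nlinarith [hsq t, norm_nonneg (x + t • u)]
    have hxnn : (0:ℝ) ≤ ‖x‖ := norm_nonneg x
    -- upper bound
    have hupper : p x ≤ 4 * lamp * P ^ 2 := by
      have hy0 : p (x + (‖x‖ + 3/2 * P) • u) = 0 := by
        apply hp0
        rw [hnorm (‖x‖ + 3/2 * P) (by positivity)]
        linarith
      have hz : ‖x + (-(‖x‖ + 3/2 * P)) • u‖ = 3/2 * P := by
        have h := hsq (-(‖x‖ + 3/2 * P))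
        nlinarith [h, norm_nonneg (x + (-(‖x‖ + 3/2 * P)) • u)]
      have hz0 : p (x + (-(‖x‖ + 3/2 * P)) • u) = 0 := by
        apply hp0; rw [hz]; linarith
      have hmid : (1/2 : ℝ) • (x + (‖x‖ + 3/2 * P) • u) + (1/2 : ℝ) • (x + (-(‖x‖ + 3/2 * P)) • u) = x := by
        module
      have hc := hpconv.2 (Set.mem_univ (x + (‖x‖ + 3/2 * P) • u))
        (Set.mem_univ (x + (-(‖x‖ + 3/2 * P)) • u))
        (by norm_num : (0:ℝ) ≤ 1/2) (by norm_num : (0:ℝ) ≤ 1/2) (by norm_num)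
      rw [hmid] at hc
      simp only [smul_eq_mul, hy0, hz0] at hc
      have h1 : ‖x + (‖x‖ + 3/2 * P) • u‖ ^ 2 = (‖x‖ + (‖x‖ + 3/2 * P)) ^ 2 :=
        hsq (‖x‖ + 3/2 * P)
      have h2 : ‖x + (-(‖x‖ + 3/2 * P)) • u‖ ^ 2 = (3/2 * P) ^ 2 := by rw [hz]
      rw [h1, h2] at hc
      nlinarith [hc, hlamp, hP.le, hx, hxnn, mul_nonneg hlamp hxnn,
        mul_nonneg hlamp hP.le, mul_le_mul_of_nonneg_left hx hlamp]
    -- lower bound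
    have hlower : -(4 * lamp * P ^ 2) ≤ p x := by
      have hm0 : p (x + (2*P) • u) = 0 := by
        apply hp0
        rw [hnorm (2*P) (by positivity)]
        linarith
      have ha0 : p (x + (4*P) • u) = 0 := by
        apply hp0
        rw [hnorm (4*P) (by positivity)]
        linarith
      have hmid : (1/2 : ℝ) • x + (1/2 : ℝ) • (x + (4*P) • u) = x + (2*P) • u := by
        module
      have hc := hpconv.2 (Set.mem_univ x) (Set.mem_univ (x + (4*P) • u))
        (by norm_num : (0:ℝ) ≤ 1/2) (by norm_num : (0:ℝ) ≤ 1/2) (by norm_num)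
      rw [hmid] at hc
      simp only [smul_eq_mul, hm0, ha0] at hc
      have h1 : ‖x + (2*P) • u‖ ^ 2 = (‖x‖ + 2*P) ^ 2 := hsq (2*P)
      have h2 : ‖x + (4*P) • u‖ ^ 2 = (‖x‖ + 4*P) ^ 2 := hsq (4*P)
      rw [h1, h2] at hc
      nlinarith [hc, hlamp, hP.le, hx, hxnn]
    exact abs_le.mpr ⟨hlower, hupper⟩
  · have : p x = 0 := hp0 x (lt_of_not_ge hx)
    rw [this, abs_zero]
    positivity
end

section
/- Let P > 0 and λ ≥ 0, and let f : ℝ → ℝ be differentiable with support contained in the interval [−P, P]. If the function t ↦ f(t) + (λ/2)t² is convex on ℝ, then |f'(t)| ≤ 2λP for every t ∈ ℝ. -/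
open Real

/-- **Estimate (4.4) in Remark 4.2.** A differentiable function `f : ℝ → ℝ`
supported in `[-P, P]` with `f'' ≥ -λ` (encoded as convexity of
`t ↦ f(t) + (λ/2)t²`) satisfies `|f'(t)| ≤ 2λP` for every `t`. -/
theorem stmt_7 (P lam : ℝ) (hP : 0 < P) (hlam : 0 ≤ lam)
    (f : ℝ → ℝ) (hfdiff : Differentiable ℝ f)
    (hfsupp : Function.support f ⊆ Set.Icc (-P) P)
    (hfconv : ConvexOn ℝ Set.univ (fun t => f t + lam / 2 * t ^ 2)) :
    ∀ t : ℝ, |deriv f t| ≤ 2 * lam * P := by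
  set g : ℝ → ℝ := fun t => f t + lam / 2 * t ^ 2 with hg
  have hgdiff : Differentiable ℝ g := by
    intro x
    exact (hfdiff x).add ((differentiable_const _).mul (differentiable_pow 2) x)
  have hgd : ∀ t, deriv g t = deriv f t + lam * t := by
    intro t
    have h1 : HasDerivAt f (deriv f t) t := (hfdiff t).hasDerivAt
    have h2 : HasDerivAt (fun s : ℝ => lam / 2 * s ^ 2) (lam / 2 * (2 * t)) t := by
      have := (hasDerivAt_pow 2 t).const_mul (lam / 2)
      simpa using this
    have : deriv g t = deriv f t + lam / 2 * (2 * t) := (h1.add h2).deriv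
    rw [this]; ring
  -- deriv f vanishes outside [-P, P]
  have hf0 : ∀ s : ℝ, s ∉ Set.Icc (-P) P → deriv f s = 0 := by
    intro s hs
    have hopen : IsOpen (Set.Icc (-P) P)ᶜ := (isClosed_Icc).isOpen_compl
    have heq : f =ᶠ[nhds s] (fun _ => (0 : ℝ)) := by
      filter_upwards [hopen.mem_nhds hs] with x hx
      by_contra hne
      exact hx (hfsupp hne)
    rw [heq.deriv_eq]
    simp
  have hmono : Monotone (deriv g) := by
    have := hfconv.monotoneOn_deriv (fun x _ => hgdiff x)
    intro a b hab
    exact this (Set.mem_univ a) (Set.mem_univ b) hab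
  intro t
  by_cases ht : t ∈ Set.Icc (-P) P
  · obtain ⟨ht1, ht2⟩ := ht
    -- upper bound: deriv g t ≤ lam * s for all s > P, so ≤ lam * P
    have hub : deriv g t ≤ lam * P := by
      have hev : ∀ s ∈ Set.Ioi P, deriv g t ≤ lam * s := by
        intro s hs
        have hle : deriv g t ≤ deriv g s := hmono (ht2.trans (le_of_lt hs))
        have : deriv g s = lam * s := by
          rw [hgd s, hf0 s (by simp only [Set.mem_Icc]; push_neg; intro h; linarith [Set.mem_Ioi.mp hs])]
          ring
        linarith [hle, this.symm ▸ hle]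
      have htends : Filter.Tendsto (fun s : ℝ => lam * s) (nhdsWithin P (Set.Ioi P)) (nhds (lam * P)) :=
        ((continuous_const.mul continuous_id).tendsto P).mono_left nhdsWithin_le_nhds
      refine ge_of_tendsto htends ?_
      filter_upwards [self_mem_nhdsWithin] with s hs using hev s hs
    have hlb : lam * (-P) ≤ deriv g t := by
      have hev : ∀ s ∈ Set.Iio (-P), lam * s ≤ deriv g t := by
        intro s hs
        have hle : deriv g s ≤ deriv g t := hmono ((le_of_lt hs).trans ht1)
        have heq : deriv g s = lam * s := by
          rw [hgd s, hf0 s (by simp only [Set.mem_Icc]; push_neg; intro h; linarith [Set.mem_Iio.mp hs, Set.mem_Iio.mp hs])]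
          ring
        linarith [heq ▸ hle]
      have htends : Filter.Tendsto (fun s : ℝ => lam * s) (nhdsWithin (-P) (Set.Iio (-P))) (nhds (lam * (-P))) :=
        ((continuous_const.mul continuous_id).tendsto (-P)).mono_left nhdsWithin_le_nhds
      refine le_of_tendsto htends ?_
      filter_upwards [self_mem_nhdsWithin] with s hs using hev s hs
    rw [hgd t] at hub hlb
    rw [abs_le]
    constructor
    · nlinarith
    · nlinarith
  · rw [hf0 t ht]
    simp
    positivity
end

section
/- Let V : ℝ → ℝ be convex with e^{-V(x)}dx a probability measure on ℝ, and suppose V attains its infimum at some x₀ ∈ ℝ. Let q : ℝ → ℝ be bounded and measurable such that e^{-V(x)−q(x)}dx is a probability measure on ℝ. Let T : ℝ → ℝ be nondecreasing and satisfy ∫_{-∞}^{x} e^{-V(t)}dt = ∫_{-∞}^{T(x)} e^{-V(t)−q(t)}dt for every x ∈ ℝ. Then for every x ∈ ℝ: −‖q⁺‖_{L∞(ℝ)} ≤ V(T(x)) − V(x) ≤ ‖q⁻‖_{L∞(ℝ)}. -/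
open MeasureTheory Real Set

private lemma expDeriv (a b t : ℝ) (hb : b ≠ 0) :
    HasDerivAt (fun t => exp (a + b * t) / b) (exp (a + b * t)) t := by
  have h : HasDerivAt (fun t : ℝ => a + b * t) b t := by
    simpa using ((hasDerivAt_id t).const_mul b).const_add a
  have := h.exp.div_const b
  rwa [mul_div_cancel_right₀ _ hb] at this

private lemma intExpIoc (a b u w : ℝ) (hb : b ≠ 0) (huw : u ≤ w) :
    ∫ t in Ioc u w, exp (a + b * t) = (exp (a + b * w) - exp (a + b * u)) / b := by
  have h1 : ∫ t in u..w, exp (a + b * t)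
      = exp (a + b * w) / b - exp (a + b * u) / b :=
    intervalIntegral.integral_eq_sub_of_hasDerivAt (fun t _ => expDeriv a b t hb)
      (Continuous.intervalIntegrable (by continuity) u w)
  rw [← intervalIntegral.integral_of_le huw, h1]; ring

private lemma expShift (a m : ℝ) :
    (fun t : ℝ => exp (a + -m * t)) = fun t : ℝ => exp a * exp (-m * t) := by
  funext t; rw [← Real.exp_add]

private lemma intExpIoiInt (a m w : ℝ) (hm : 0 < m) :
    IntegrableOn (fun t => exp (a + -m * t)) (Ioi w) := by
  rw [expShift]
  exact (exp_neg_integrableOn_Ioi w hm).const_mul _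

private lemma intExpIoi (a m w : ℝ) (hm : 0 < m) :
    ∫ t in Ioi w, exp (a + -m * t) = exp (a + -m * w) / m := by
  have hderiv : ∀ t ∈ Ici w,
      HasDerivAt (fun t => exp (a + -m * t) / (-m)) (exp (a + -m * t)) t :=
    fun t _ => expDeriv a (-m) t (by linarith)
  have h1 : Filter.Tendsto (fun t : ℝ => -m * t) Filter.atTop Filter.atBot :=
    Filter.tendsto_id.const_mul_atTop_of_neg (by linarith : -m < 0)
  have h2 : Filter.Tendsto (fun t : ℝ => a + -m * t) Filter.atTop Filter.atBot :=
    Filter.tendsto_atBot_add_const_left _ a h1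
  have htend : Filter.Tendsto (fun t => exp (a + -m * t) / (-m)) Filter.atTop (nhds 0) := by
    have := (Real.tendsto_exp_atBot.comp h2).div_const (-m)
    simpa using this
  have := integral_Ioi_of_hasDerivAt_of_tendsto' hderiv (intExpIoiInt a m w hm) htend
  rw [this]
  field_simp
  ring

private lemma intExpIic (a m u : ℝ) (hm : 0 < m) :
    ∫ t in Iic u, exp (a + m * t) = exp (a + m * u) / m := by
  have h := integral_comp_neg_Iic u (fun t => exp (a + -m * t))
  rw [intExpIoi a m (-u) hm] at h
  have h2 : ∀ t : ℝ, a + -m * -t = a + m * t := fun t => by ring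
  simp only [h2] at h
  exact h

private lemma intExpIicInt (a m u : ℝ) (hm : 0 < m) :
    IntegrableOn (fun t => exp (a + m * t)) (Iic u) := by
  have h1 : IntegrableOn (fun t => exp (a + -m * t)) (Ioi (-u)) := intExpIoiInt a m (-u) hm
  have h2 := ((integrable_indicator_iff measurableSet_Ioi).mpr h1).comp_neg
  have h3 : (fun t : ℝ => (Ioi (-u)).indicator (fun t => exp (a + -m * t)) (-t))
      = (Iio u).indicator (fun t => exp (a + m * t)) := by
    funext t
    by_cases ht : t < u
    · rw [Set.indicator_of_mem (by simpa using ht), Set.indicator_of_mem (by simpa using ht)]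
      ring_nf
    · rw [Set.indicator_of_notMem (by simpa using ht), Set.indicator_of_notMem (by simpa using ht)]
  rw [h3] at h2
  have h4 : IntegrableOn (fun t => exp (a + m * t)) (Iio u) :=
    (integrable_indicator_iff measurableSet_Iio).mp h2
  exact h4.congr_set_ae Iio_ae_eq_Iic.symm

private lemma chordBound {V : ℝ → ℝ} (hV : ConvexOn ℝ Set.univ V) {u w t : ℝ}
    (huw : u < w) (hut : u ≤ t) (htw : t ≤ w) :
    V t ≤ V u + (V w - V u) / (w - u) * (t - u) := by
  have hwu : (0:ℝ) < w - u := by linarith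
  have h := hV.2 (Set.mem_univ u) (Set.mem_univ w)
    (show (0:ℝ) ≤ (w - t)/(w - u) from div_nonneg (by linarith) (by linarith))
    (show (0:ℝ) ≤ (t - u)/(w - u) from div_nonneg (by linarith) (by linarith))
    (show (w - t)/(w - u) + (t - u)/(w - u) = 1 by
      rw [← add_div, div_eq_one_iff_eq hwu.ne']; ring)
  have ht' : ((w - t)/(w - u)) • u + ((t - u)/(w - u)) • w = t := by
    simp only [smul_eq_mul]; field_simp; ring
  rw [ht', smul_eq_mul, smul_eq_mul] at h
  have heq : (w - t)/(w - u) * V u + (t - u)/(w - u) * V w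
      = V u + (V w - V u)/(w - u) * (t - u) := by
    field_simp; ring
  linarith [h, heq.le]

private lemma slopeRight {V : ℝ → ℝ} (hV : ConvexOn ℝ Set.univ V) {u w t : ℝ}
    (huw : u < w) (hwt : w < t) :
    V w + (V w - V u) / (w - u) * (t - w) ≤ V t := by
  have h := hV.slope_mono_adjacent (Set.mem_univ u) (Set.mem_univ t) huw hwt
  have htw : (0:ℝ) < t - w := by linarith
  have := (le_div_iff₀ htw).mp h
  linarith [this]

private lemma slopeLeft {V : ℝ → ℝ} (hV : ConvexOn ℝ Set.univ V) {u w t : ℝ}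
    (huw : u < w) (htu : t ≤ u) :
    V u + (V w - V u) / (w - u) * (t - u) ≤ V t := by
  rcases eq_or_lt_of_le htu with rfl | htu'
  · simp
  · have h := hV.slope_mono_adjacent (Set.mem_univ t) (Set.mem_univ w) htu' huw
    have hut : (0:ℝ) < u - t := by linarith
    have h2 := (div_le_iff₀ hut).mp h
    have h3 : (V w - V u) / (w - u) * (u - t) = -((V w - V u) / (w - u) * (t - u)) := by ring
    linarith [h2, h3.le, h3.ge]

private lemma tail_up {V : ℝ → ℝ} (hV : ConvexOn ℝ Set.univ V)
    (hfint : Integrable (fun t => exp (-V t)))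
    {u w C : ℝ} (huw : u < w) (hD : V u < V w) (hC : 0 ≤ C)
    (h : ∫ t in Ioc u w, exp (-V t) ≤ C * ∫ t in Ioi w, exp (-V t)) :
    exp (-V u) ≤ (C + 1) * exp (-V w) := by
  have hwu : (0:ℝ) < w - u := by linarith
  set s := (V w - V u) / (w - u) with hs
  have hs0 : 0 < s := div_pos (by linarith) hwu
  have hsw : s * (w - u) = V w - V u := by
    rw [hs]; field_simp
  -- lower bound for the Ioc integral
  have h1 : (exp (-V u) - exp (-V w)) / s ≤ ∫ t in Ioc u w, exp (-V t) := by
    have hint : IntegrableOn (fun t => exp ((-V u + s * u) + -s * t)) (Ioc u w) :=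
      Continuous.integrableOn_Ioc (by continuity)
    have hmono := setIntegral_mono_on hint hfint.integrableOn measurableSet_Ioc
      (fun t ht => by
        have hc := chordBound hV huw ht.1.le ht.2
        have hr : s * (t - u) = s * t - s * u := by ring
        exact exp_le_exp.mpr (by linarith))
    have hval : ∫ t in Ioc u w, exp ((-V u + s * u) + -s * t)
        = (exp (-V u) - exp (-V w)) / s := by
      rw [intExpIoc _ _ _ _ (by linarith : -s ≠ 0) huw.le]
      have e1 : (-V u + s * u) + -s * w = -V w := by nlinarith [hsw]
      have e2 : (-V u + s * u) + -s * u = -V u := by ring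
      rw [e1, e2, div_neg, ← neg_div, neg_sub]
    linarith [hmono, hval.ge, hval.le]
  -- upper bound for the Ioi integral
  have h2 : ∫ t in Ioi w, exp (-V t) ≤ exp (-V w) / s := by
    have hint2 : IntegrableOn (fun t => exp ((-V w + s * w) + -s * t)) (Ioi w) :=
      intExpIoiInt _ s w hs0
    have hmono := setIntegral_mono_on hfint.integrableOn hint2 measurableSet_Ioi
      (fun t ht => by
        have hsl := slopeRight hV huw (mem_Ioi.mp ht)
        have hr : s * (t - w) = s * t - s * w := by ring
        exact exp_le_exp.mpr (by linarith))
    have hval := intExpIoi (-V w + s * w) s w hs0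
    have e1 : (-V w + s * w) + -s * w = -V w := by ring
    rw [e1] at hval
    linarith [hmono, hval.le]
  have h3 : (exp (-V u) - exp (-V w)) / s ≤ C * (exp (-V w) / s) :=
    le_trans h1 (le_trans h (mul_le_mul_of_nonneg_left h2 hC))
  have h4 : exp (-V u) - exp (-V w) ≤ C * exp (-V w) := by
    have h5 := mul_le_mul_of_nonneg_right h3 hs0.le
    calc exp (-V u) - exp (-V w) = (exp (-V u) - exp (-V w)) / s * s :=
          (div_mul_cancel₀ _ hs0.ne').symm
      _ ≤ C * (exp (-V w) / s) * s := h5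
      _ = C * exp (-V w) := by rw [mul_assoc, div_mul_cancel₀ _ hs0.ne']
  nlinarith [h4]

private lemma tail_down {V : ℝ → ℝ} (hV : ConvexOn ℝ Set.univ V)
    (hfint : Integrable (fun t => exp (-V t)))
    {u w C : ℝ} (huw : u < w) (hD : V w < V u) (hC : 0 ≤ C)
    (h : ∫ t in Ioc u w, exp (-V t) ≤ C * ∫ t in Iic u, exp (-V t)) :
    exp (-V w) ≤ (C + 1) * exp (-V u) := by
  have hwu : (0:ℝ) < w - u := by linarith
  set s := (V w - V u) / (w - u) with hs
  have hm0 : 0 < -s := by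
    have : s < 0 := div_neg_of_neg_of_pos (by linarith) hwu
    linarith
  have hsw : s * (w - u) = V w - V u := by
    rw [hs]; field_simp
  set a := -V u + s * u with ha
  -- lower bound for the Ioc integral
  have h1 : (exp (-V w) - exp (-V u)) / (-s) ≤ ∫ t in Ioc u w, exp (-V t) := by
    have hint : IntegrableOn (fun t => exp (a + -s * t)) (Ioc u w) :=
      Continuous.integrableOn_Ioc (by continuity)
    have hmono := setIntegral_mono_on hint hfint.integrableOn measurableSet_Ioc
      (fun t ht => by
        have hc := chordBound hV huw ht.1.le ht.2
        have hr : s * (t - u) = s * t - s * u := by ring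
        exact exp_le_exp.mpr (by rw [ha]; linarith))
    have hval : ∫ t in Ioc u w, exp (a + -s * t)
        = (exp (-V w) - exp (-V u)) / (-s) := by
      rw [intExpIoc _ _ _ _ (by linarith : -s ≠ 0) huw.le]
      have e1 : a + -s * w = -V w := by rw [ha]; nlinarith [hsw]
      have e2 : a + -s * u = -V u := by rw [ha]; ring
      rw [e1, e2]
    linarith [hmono, hval.ge]
  -- upper bound for the Iic integral
  have h2 : ∫ t in Iic u, exp (-V t) ≤ exp (-V u) / (-s) := by
    have hint2 : IntegrableOn (fun t => exp (a + -s * t)) (Iic u) := by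
      have := intExpIicInt a (-s) u hm0
      simpa using this
    have hmono := setIntegral_mono_on hfint.integrableOn hint2 measurableSet_Iic
      (fun t ht => by
        have hsl := slopeLeft hV huw (mem_Iic.mp ht)
        have hr : s * (t - u) = s * t - s * u := by ring
        exact exp_le_exp.mpr (by rw [ha]; linarith))
    have hval := intExpIic a (-s) u hm0
    have e2 : a + -s * u = -V u := by rw [ha]; ring
    rw [e2] at hval
    have hval' : ∫ t in Iic u, exp (a + -s * t) = exp (-V u) / (-s) := hval
    linarith [hmono, hval'.le]
  have h3 : (exp (-V w) - exp (-V u)) / (-s) ≤ C * (exp (-V u) / (-s)) :=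
    le_trans h1 (le_trans h (mul_le_mul_of_nonneg_left h2 hC))
  have h4 : exp (-V w) - exp (-V u) ≤ C * exp (-V u) := by
    have h5 := mul_le_mul_of_nonneg_right h3 hm0.le
    calc exp (-V w) - exp (-V u) = (exp (-V w) - exp (-V u)) / (-s) * (-s) :=
          (div_mul_cancel₀ _ hm0.ne').symm
      _ ≤ C * (exp (-V u) / (-s)) * (-s) := h5
      _ = C * exp (-V u) := by rw [mul_assoc, div_mul_cancel₀ _ hm0.ne']
  nlinarith [h4]

/-- **Estimate (5.9) in the proof of Theorem 1.2.** If `T` is the monotone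
transport taking `e^{-V}dx` to `e^{-V-q}dx` with `V : ℝ → ℝ` convex attaining
its infimum, then the potential changes by at most the size of the
perturbation along the transport:
`-‖q⁺‖_∞ ≤ V(T(x)) - V(x) ≤ ‖q⁻‖_∞` for every `x`. -/
theorem stmt_10 (V : ℝ → ℝ) (hVconv : ConvexOn ℝ Set.univ V)
    (hμ : IsProbabilityMeasure
      ((volume : Measure ℝ).withDensity fun x =>
        ENNReal.ofReal (Real.exp (-V x))))
    (x₀ : ℝ) (hx₀ : ∀ x, V x₀ ≤ V x)
    (q : ℝ → ℝ) (hqmeas : Measurable q) (hqbdd : ∃ M, ∀ x, |q x| ≤ M)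
    (hν : IsProbabilityMeasure
      ((volume : Measure ℝ).withDensity fun x =>
        ENNReal.ofReal (Real.exp (-V x - q x))))
    (T : ℝ → ℝ) (hT : Monotone T)
    (hbal : ∀ x : ℝ, ∫ t in Set.Iic x, Real.exp (-V t)
      = ∫ t in Set.Iic (T x), Real.exp (-V t - q t)) :
    ∀ x : ℝ,
      -(⨆ z, max (q z) 0) ≤ V (T x) - V x ∧
        V (T x) - V x ≤ ⨆ z, max (-q z) 0 := by
  obtain ⟨M, hM⟩ := hqbdd
  set A := ⨆ z, max (q z) 0 with hAdef
  set B := ⨆ z, max (-q z) 0 with hBdef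
  have hbddA : BddAbove (Set.range fun z => max (q z) 0) := by
    refine ⟨max M 0, ?_⟩
    rintro _ ⟨z, rfl⟩
    exact max_le_max (abs_le.mp (hM z)).2 le_rfl
  have hbddB : BddAbove (Set.range fun z => max (-q z) 0) := by
    refine ⟨max M 0, ?_⟩
    rintro _ ⟨z, rfl⟩
    exact max_le_max (neg_le.mp (abs_le.mp (hM z)).1) le_rfl
  have hA : ∀ z, q z ≤ A := fun z => le_trans (le_max_left _ _) (le_ciSup hbddA z)
  have hB : ∀ z, -q z ≤ B := fun z => le_trans (le_max_left _ _) (le_ciSup hbddB z)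
  have hA0 : 0 ≤ A := le_trans (le_max_right (q 0) 0) (le_ciSup hbddA 0)
  have hB0 : 0 ≤ B := le_trans (le_max_right (-q 0) 0) (le_ciSup hbddB 0)
  -- continuity and measurability
  have hVcont : Continuous V := by
    rw [← continuousOn_univ]
    exact hVconv.continuousOn isOpen_univ
  have hfmeas : Measurable fun t => exp (-V t) := (hVcont.measurable.neg).exp
  have hgmeas : Measurable fun t => exp (-V t - q t) :=
    ((hVcont.measurable.neg).sub hqmeas).exp
  -- total lintegrals
  have hμu : ∫⁻ t, ENNReal.ofReal (exp (-V t)) = 1 := by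
    have := hμ.measure_univ
    rwa [withDensity_apply _ MeasurableSet.univ, Measure.restrict_univ] at this
  have hνu : ∫⁻ t, ENNReal.ofReal (exp (-V t - q t)) = 1 := by
    have := hν.measure_univ
    rwa [withDensity_apply _ MeasurableSet.univ, Measure.restrict_univ] at this
  -- integrability
  have hfint : Integrable fun t => exp (-V t) := by
    have h := integrable_toReal_of_lintegral_ne_top (μ := volume)
      (f := fun t => ENNReal.ofReal (exp (-V t)))
      hfmeas.ennreal_ofReal.aemeasurable (by rw [hμu]; exact ENNReal.one_ne_top)
    exact h.congr (Filter.Eventually.of_forall fun t => ENNReal.toReal_ofReal (exp_nonneg _))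
  have hgint : Integrable fun t => exp (-V t - q t) := by
    have h := integrable_toReal_of_lintegral_ne_top (μ := volume)
      (f := fun t => ENNReal.ofReal (exp (-V t - q t)))
      hgmeas.ennreal_ofReal.aemeasurable (by rw [hνu]; exact ENNReal.one_ne_top)
    exact h.congr (Filter.Eventually.of_forall fun t => ENNReal.toReal_ofReal (exp_nonneg _))
  -- totals
  have hftot : ∫ t, exp (-V t) = 1 := by
    rw [integral_eq_lintegral_of_nonneg_ae (Filter.Eventually.of_forall fun t => exp_nonneg _)
      hfmeas.aestronglyMeasurable, hμu, ENNReal.toReal_one]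
  have hgtot : ∫ t, exp (-V t - q t) = 1 := by
    rw [integral_eq_lintegral_of_nonneg_ae (Filter.Eventually.of_forall fun t => exp_nonneg _)
      hgmeas.aestronglyMeasurable, hνu, ENNReal.toReal_one]
  -- splitting
  have hsplit_f : ∀ y : ℝ, (∫ t in Iic y, exp (-V t)) + ∫ t in Ioi y, exp (-V t) = 1 := by
    intro y
    rw [← compl_Iic, integral_add_compl measurableSet_Iic hfint, hftot]
  have hsplit_g : ∀ y : ℝ, (∫ t in Iic y, exp (-V t - q t)) + ∫ t in Ioi y, exp (-V t - q t) = 1 := by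
    intro y
    rw [← compl_Iic, integral_add_compl measurableSet_Iic hgint, hgtot]
  -- right-tail balance
  have hbal2 : ∀ x : ℝ, ∫ t in Ioi x, exp (-V t) = ∫ t in Ioi (T x), exp (-V t - q t) := by
    intro x
    have h1 := hsplit_f x
    have h2 := hsplit_g (T x)
    have h3 := hbal x
    linarith
  -- comparison bounds
  have hgle : ∀ t, exp (-V t - q t) ≤ exp B * exp (-V t) := by
    intro t
    rw [← exp_add]
    exact exp_le_exp.mpr (by linarith [hB t])
  have hgge : ∀ t, exp (-A) * exp (-V t) ≤ exp (-V t - q t) := by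
    intro t
    rw [← exp_add]
    exact exp_le_exp.mpr (by linarith [hA t])
  have key_le : ∀ s : Set ℝ, MeasurableSet s →
      (∫ t in s, exp (-V t - q t)) ≤ exp B * ∫ t in s, exp (-V t) := by
    intro s hs
    rw [← integral_const_mul]
    exact setIntegral_mono_on hgint.integrableOn (hfint.integrableOn.const_mul _) hs
      fun t _ => hgle t
  have key_ge : ∀ s : Set ℝ, MeasurableSet s →
      exp (-A) * (∫ t in s, exp (-V t)) ≤ ∫ t in s, exp (-V t - q t) := by
    intro s hs
    rw [← integral_const_mul]
    exact setIntegral_mono_on (hfint.integrableOn.const_mul _) hgint.integrableOn hs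
      fun t _ => hgge t
  have hexpA : exp (-A) * exp A = 1 := by rw [← exp_add]; simp
  have hexpB0 : (0:ℝ) ≤ exp B - 1 := by
    have : (1:ℝ) = exp 0 := (exp_zero).symm
    nlinarith [exp_le_exp.mpr hB0]
  have hexpA0 : (0:ℝ) ≤ exp A - 1 := by
    have : (1:ℝ) = exp 0 := (exp_zero).symm
    nlinarith [exp_le_exp.mpr hA0]
  intro x
  constructor
  · -- lower bound
    have key : V x - V (T x) ≤ A := by
      rcases le_or_gt (V x - V (T x)) 0 with h0 | h0
      · linarith
      · have hD : V (T x) < V x := by linarith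
        rcases lt_trichotomy x (T x) with hlt | heq | hgt
        · -- x < T x : tail_down with u = x, w = T x
          have hsplit : ∫ t in Iic (T x), exp (-V t)
              = (∫ t in Iic x, exp (-V t)) + ∫ t in Ioc x (T x), exp (-V t) := by
            rw [← Iic_union_Ioc_eq_Iic hlt.le,
              setIntegral_union (Iic_disjoint_Ioc le_rfl) measurableSet_Ioc
                hfint.integrableOn hfint.integrableOn]
          have hge := key_ge (Iic (T x)) measurableSet_Iic
          rw [← hbal x] at hge
          have h1 : ∫ t in Iic (T x), exp (-V t) ≤ exp A * ∫ t in Iic x, exp (-V t) := by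
            calc ∫ t in Iic (T x), exp (-V t)
                = exp A * (exp (-A) * ∫ t in Iic (T x), exp (-V t)) := by
                  rw [← mul_assoc, mul_comm (exp A), hexpA, one_mul]
              _ ≤ exp A * ∫ t in Iic x, exp (-V t) :=
                  mul_le_mul_of_nonneg_left hge (exp_pos A).le
          have h2 : ∫ t in Ioc x (T x), exp (-V t)
              ≤ (exp A - 1) * ∫ t in Iic x, exp (-V t) := by nlinarith [hsplit, h1]
          have := tail_down hVconv hfint hlt hD hexpA0 h2
          have h3 : exp (-V (T x)) ≤ exp (A + -V x) := by
            rw [exp_add]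
            have hr : (exp A - 1 + 1) * exp (-V x) = exp A * exp (-V x) := by ring
            linarith [this, hr.le, hr.ge]
          have := exp_le_exp.mp h3
          linarith
        · rw [← heq] at hD; linarith
        · -- T x < x : tail_up with u = T x, w = x
          have hsplit : ∫ t in Ioi (T x), exp (-V t)
              = (∫ t in Ioc (T x) x, exp (-V t)) + ∫ t in Ioi x, exp (-V t) := by
            rw [← Ioc_union_Ioi_eq_Ioi hgt.le,
              setIntegral_union (Ioc_disjoint_Ioi le_rfl) measurableSet_Ioi
                hfint.integrableOn hfint.integrableOn]
          have hge := key_ge (Ioi (T x)) measurableSet_Ioi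
          rw [← hbal2 x] at hge
          have h1 : ∫ t in Ioi (T x), exp (-V t) ≤ exp A * ∫ t in Ioi x, exp (-V t) := by
            calc ∫ t in Ioi (T x), exp (-V t)
                = exp A * (exp (-A) * ∫ t in Ioi (T x), exp (-V t)) := by
                  rw [← mul_assoc, mul_comm (exp A), hexpA, one_mul]
              _ ≤ exp A * ∫ t in Ioi x, exp (-V t) :=
                  mul_le_mul_of_nonneg_left hge (exp_pos A).le
          have h2 : ∫ t in Ioc (T x) x, exp (-V t)
              ≤ (exp A - 1) * ∫ t in Ioi x, exp (-V t) := by nlinarith [hsplit, h1]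
          have := tail_up hVconv hfint hgt hD hexpA0 h2
          have h3 : exp (-V (T x)) ≤ exp (A + -V x) := by
            rw [exp_add]
            have hr : (exp A - 1 + 1) * exp (-V x) = exp A * exp (-V x) := by ring
            linarith [this, hr.le, hr.ge]
          have := exp_le_exp.mp h3
          linarith
    linarith
  · -- upper bound
    have key : V (T x) - V x ≤ B := by
      rcases le_or_gt (V (T x) - V x) 0 with h0 | h0
      · linarith
      · have hD : V x < V (T x) := by linarith
        rcases lt_trichotomy x (T x) with hlt | heq | hgt
        · -- x < T x : tail_up with u = x, w = T x
          have hsplit : ∫ t in Ioi x, exp (-V t)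
              = (∫ t in Ioc x (T x), exp (-V t)) + ∫ t in Ioi (T x), exp (-V t) := by
            rw [← Ioc_union_Ioi_eq_Ioi hlt.le,
              setIntegral_union (Ioc_disjoint_Ioi le_rfl) measurableSet_Ioi
                hfint.integrableOn hfint.integrableOn]
          have hle := key_le (Ioi (T x)) measurableSet_Ioi
          rw [← hbal2 x] at hle
          have h2 : ∫ t in Ioc x (T x), exp (-V t)
              ≤ (exp B - 1) * ∫ t in Ioi (T x), exp (-V t) := by nlinarith [hsplit, hle]
          have := tail_up hVconv hfint hlt hD hexpB0 h2
          have h3 : exp (-V x) ≤ exp (B + -V (T x)) := by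
            rw [exp_add]
            have hr : (exp B - 1 + 1) * exp (-V (T x)) = exp B * exp (-V (T x)) := by ring
            linarith [this, hr.le, hr.ge]
          have := exp_le_exp.mp h3
          linarith
        · rw [← heq] at hD; linarith
        · -- T x < x : tail_down with u = T x, w = x
          have hsplit : ∫ t in Iic x, exp (-V t)
              = (∫ t in Iic (T x), exp (-V t)) + ∫ t in Ioc (T x) x, exp (-V t) := by
            rw [← Iic_union_Ioc_eq_Iic hgt.le,
              setIntegral_union (Iic_disjoint_Ioc le_rfl) measurableSet_Ioc
                hfint.integrableOn hfint.integrableOn]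
          have hle := key_le (Iic (T x)) measurableSet_Iic
          rw [← hbal x] at hle
          have h2 : ∫ t in Ioc (T x) x, exp (-V t)
              ≤ (exp B - 1) * ∫ t in Iic (T x), exp (-V t) := by nlinarith [hsplit, hle]
          have := tail_down hVconv hfint hgt hD hexpB0 h2
          have h3 : exp (-V x) ≤ exp (B + -V (T x)) := by
            rw [exp_add]
            have hr : (exp B - 1 + 1) * exp (-V (T x)) = exp B * exp (-V (T x)) := by ring
            linarith [this, hr.le, hr.ge]
          have := exp_le_exp.mp h3
          linarith
    linarith
end

section
/- There exists a universal constant C > 0 with the following property. Let V : ℝ → ℝ be convex and let q : ℝ → ℝ be bounded and measurable with ‖q‖_{L∞(ℝ)} ≤ 1, such that e^{-V(x)}dx and e^{-V(x)−q(x)}dx are both probability measures on ℝ. If T : ℝ → ℝ is nondecreasing and satisfies ∫_{-∞}^{x} e^{-V(t)}dt = ∫_{-∞}^{T(x)} e^{-V(t)−q(t)}dt for every x ∈ ℝ, then for all x ≤ y: |T(y) − T(x) − (y − x)| ≤ C·‖q‖_{L∞(ℝ)}·(y − x). -/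
open MeasureTheory Real

open Set


private lemma stmt11_absorb {A c : ℝ} (hA : 0 < A) (hc : c < 1) (h : A ≤ c * A) : False := by
  nlinarith

/-- Increments of a convex function over a fixed length are nondecreasing. -/
private lemma stmt11_convex_increment {V : ℝ → ℝ} (hV : ConvexOn ℝ Set.univ V)
    {u v Δ : ℝ} (huv : u ≤ v) (hΔ : 0 ≤ Δ) :
    V (u + Δ) - V u ≤ V (v + Δ) - V v := by
  rcases eq_or_lt_of_le (show u ≤ v + Δ by linarith) with h | h
  · have hΔ0 : Δ = 0 := by linarith [le_antisymm (show Δ ≤ 0 by linarith) hΔ]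
    have huv0 : u = v := by linarith
    simp [hΔ0, huv0]
  · set D : ℝ := v + Δ - u with hD
    have hDpos : 0 < D := by simp only [hD]; linarith
    have ht1 : (0:ℝ) ≤ Δ / D := div_nonneg hΔ hDpos.le
    have ht2 : (0:ℝ) ≤ (v - u) / D := div_nonneg (by linarith) hDpos.le
    have hsum : (v - u)/D + Δ/D = 1 := by rw [← add_div, hD]; field_simp; ring
    have hsum' : Δ/D + (v - u)/D = 1 := by linarith
    have h1 := hV.2 (Set.mem_univ u) (Set.mem_univ (v + Δ)) ht2 ht1 hsum
    have h2 := hV.2 (Set.mem_univ u) (Set.mem_univ (v + Δ)) ht1 ht2 hsum'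
    have e1 : ((v - u)/D) • u + (Δ/D) • (v + Δ) = u + Δ := by
      simp only [smul_eq_mul]; field_simp; ring
    have e2 : (Δ/D) • u + ((v - u)/D) • (v + Δ) = v := by
      simp only [smul_eq_mul]; field_simp; ring
    rw [e1] at h1; rw [e2] at h2
    simp only [smul_eq_mul] at h1 h2
    have key1 : ((v - u)/D) * V u + (Δ/D) * V u = V u := by
      rw [← add_mul, hsum, one_mul]
    have key2 : (Δ/D) * V (v + Δ) + ((v - u)/D) * V (v + Δ) = V (v + Δ) := by
      rw [← add_mul, hsum', one_mul]
    linarith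

private lemma stmt11_shift_Iic (f : ℝ → ℝ) (c Δ : ℝ) :
    ∫ t in Iic c, f (t + Δ) = ∫ t in Iic (c + Δ), f t := by
  have h := (measurePreserving_add_right (volume : Measure ℝ) Δ).setIntegral_preimage_emb
    (MeasurableEquiv.addRight Δ).measurableEmbedding f (Iic (c + Δ))
  have hpre : (· + Δ : ℝ → ℝ) ⁻¹' (Iic (c + Δ)) = Iic c := by ext t; simp
  rw [hpre] at h; exact h

private lemma stmt11_shift_Ioi (f : ℝ → ℝ) (c Δ : ℝ) :
    ∫ t in Ioi c, f (t + Δ) = ∫ t in Ioi (c + Δ), f t := by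
  have h := (measurePreserving_add_right (volume : Measure ℝ) Δ).setIntegral_preimage_emb
    (MeasurableEquiv.addRight Δ).measurableEmbedding f (Ioi (c + Δ))
  have hpre : (· + Δ : ℝ → ℝ) ⁻¹' (Ioi (c + Δ)) = Ioi c := by ext t; simp
  rw [hpre] at h; exact h

private lemma stmt11_shift_integrable {f : ℝ → ℝ} (hf : Integrable f volume) (Δ : ℝ) :
    Integrable (fun t => f (t + Δ)) volume := by
  have := ((measurePreserving_add_right (volume : Measure ℝ) Δ).integrable_comp_emb
    (MeasurableEquiv.addRight Δ).measurableEmbedding (g := f)).mpr hf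
  exact this

private lemma stmt11_pos_Iic {V : ℝ → ℝ}
    (hfi : Integrable (fun t => exp (-V t)) volume) (c : ℝ) :
    0 < ∫ t in Iic c, exp (-V t) := by
  rw [setIntegral_pos_iff_support_of_nonneg_ae
    (Filter.Eventually.of_forall fun t => (exp_pos _).le) hfi.integrableOn]
  have hsupp : Function.support (fun t => exp (-V t)) = Set.univ := by
    ext t; simp [Function.mem_support, (exp_pos (-V t)).ne']
  rw [hsupp, Set.univ_inter, Real.volume_Iic]
  exact ENNReal.zero_lt_top

private lemma stmt11_pos_Ioi {V : ℝ → ℝ}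
    (hfi : Integrable (fun t => exp (-V t)) volume) (c : ℝ) :
    0 < ∫ t in Ioi c, exp (-V t) := by
  rw [setIntegral_pos_iff_support_of_nonneg_ae
    (Filter.Eventually.of_forall fun t => (exp_pos _).le) hfi.integrableOn]
  have hsupp : Function.support (fun t => exp (-V t)) = Set.univ := by
    ext t; simp [Function.mem_support, (exp_pos (-V t)).ne']
  rw [hsupp, Set.univ_inter, Real.volume_Ioi]
  exact ENNReal.zero_lt_top
private lemma stmt11_cmp_gf {V q : ℝ → ℝ} {M : ℝ} (hq : ∀ t, |q t| ≤ M)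
    (hfi : Integrable (fun t => exp (-V t)) volume)
    (hgi : Integrable (fun t => exp (-V t - q t)) volume)
    {s : Set ℝ} (hs : MeasurableSet s) :
    (∫ t in s, exp (-V t - q t)) ≤ exp M * ∫ t in s, exp (-V t) := by
  calc (∫ t in s, exp (-V t - q t)) ≤ ∫ t in s, exp M * exp (-V t) := by
        refine setIntegral_mono_on hgi.integrableOn
          ((hfi.const_mul (exp M)).integrableOn) hs fun t _ => ?_
        rw [← exp_add]
        apply exp_le_exp.mpr
        have := (abs_le.mp (hq t)).1
        linarith
    _ = exp M * ∫ t in s, exp (-V t) := integral_const_mul _ _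

private lemma stmt11_cmp_fg {V q : ℝ → ℝ} {M : ℝ} (hq : ∀ t, |q t| ≤ M)
    (hfi : Integrable (fun t => exp (-V t)) volume)
    (hgi : Integrable (fun t => exp (-V t - q t)) volume)
    {s : Set ℝ} (hs : MeasurableSet s) :
    (∫ t in s, exp (-V t)) ≤ exp M * ∫ t in s, exp (-V t - q t) := by
  calc (∫ t in s, exp (-V t)) ≤ ∫ t in s, exp M * exp (-V t - q t) := by
        refine setIntegral_mono_on hfi.integrableOn
          ((hgi.const_mul (exp M)).integrableOn) hs fun t _ => ?_
        rw [← exp_add]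
        apply exp_le_exp.mpr
        have := (abs_le.mp (hq t)).2
        linarith
    _ = exp M * ∫ t in s, exp (-V t - q t) := integral_const_mul _ _

/-- The key pointwise estimate `|V (T x) - V x| ≤ M`. -/
private lemma stmt11_pointwise {V q T : ℝ → ℝ} {M : ℝ} (hV : ConvexOn ℝ Set.univ V)
    (hM : 0 ≤ M) (hq : ∀ t, |q t| ≤ M)
    (hfi : Integrable (fun t => exp (-V t)) volume)
    (hgi : Integrable (fun t => exp (-V t - q t)) volume)
    (htot : (∫ t, exp (-V t)) = ∫ t, exp (-V t - q t))
    (hbal : ∀ x, (∫ t in Iic x, exp (-V t)) = ∫ t in Iic (T x), exp (-V t - q t))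
    (x : ℝ) : |V (T x) - V x| ≤ M := by
  have hbalIoi : (∫ t in Ioi x, exp (-V t)) = ∫ t in Ioi (T x), exp (-V t - q t) := by
    have h1 := integral_add_compl (measurableSet_Iic (a := x)) hfi
    have h2 := integral_add_compl (measurableSet_Iic (a := T x)) hgi
    rw [compl_Iic] at h1 h2
    have h3 := hbal x
    linarith
  set a : ℝ := T x with ha
  have hexplt : ∀ β : ℝ, M < β → exp (M - β) < 1 := by
    intro β hβ
    rw [← exp_zero]
    exact exp_lt_exp.mpr (by linarith)
  rw [abs_le]
  constructor
  · -- -M ≤ V a - V x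
    by_contra hcon
    push_neg at hcon
    have hβ : M < V x - V a := by linarith
    rcases lt_trichotomy x a with hxa | hxa | hxa
    · set Δ : ℝ := a - x with hΔ
      have hΔpos : (0:ℝ) < Δ := by simp only [hΔ]; linarith
      have hxΔ : x + Δ = a := by simp only [hΔ]; ring
      have hpos := stmt11_pos_Iic hfi x
      have hchain : (∫ t in Iic x, exp (-V t))
          ≤ exp (M - (V x - V a)) * ∫ t in Iic x, exp (-V t) := by
        have step1 : (∫ t in Iic x, exp (-V t))
            ≤ exp (-(V x - V a)) * ∫ t in Iic a, exp (-V t) := by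
          calc (∫ t in Iic x, exp (-V t))
              ≤ ∫ t in Iic x, exp (-(V x - V a)) * exp (-V (t + Δ)) := by
                refine setIntegral_mono_on hfi.integrableOn
                  (((stmt11_shift_integrable hfi Δ).const_mul _).integrableOn)
                  measurableSet_Iic fun t ht => ?_
                have hinc := stmt11_convex_increment hV (ht : t ≤ x) hΔpos.le
                rw [hxΔ] at hinc
                rw [← exp_add]
                exact exp_le_exp.mpr (by linarith)
            _ = exp (-(V x - V a)) * ∫ t in Iic x, exp (-V (t + Δ)) :=
                integral_const_mul _ _
            _ = exp (-(V x - V a)) * ∫ t in Iic (x + Δ), exp (-V t) := by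
                rw [stmt11_shift_Iic (fun t => exp (-V t)) x Δ]
            _ = exp (-(V x - V a)) * ∫ t in Iic a, exp (-V t) := by rw [hxΔ]
        have step2 : (∫ t in Iic a, exp (-V t))
            ≤ exp M * ∫ t in Iic x, exp (-V t) := by
          calc (∫ t in Iic a, exp (-V t))
              ≤ exp M * ∫ t in Iic a, exp (-V t - q t) :=
                stmt11_cmp_fg hq hfi hgi measurableSet_Iic
            _ = exp M * ∫ t in Iic x, exp (-V t) := by rw [← hbal x]
        calc (∫ t in Iic x, exp (-V t))
            ≤ exp (-(V x - V a)) * ∫ t in Iic a, exp (-V t) := step1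
          _ ≤ exp (-(V x - V a)) * (exp M * ∫ t in Iic x, exp (-V t)) := by
              exact mul_le_mul_of_nonneg_left step2 (exp_pos _).le
          _ = exp (M - (V x - V a)) * ∫ t in Iic x, exp (-V t) := by
              rw [← mul_assoc, ← exp_add]; ring_nf
      exact stmt11_absorb hpos (hexplt _ hβ) hchain
    · rw [← hxa] at hβ; linarith
    · set Δ : ℝ := x - a with hΔ
      have hΔpos : (0:ℝ) < Δ := by simp only [hΔ]; linarith
      have haΔ : a + Δ = x := by simp only [hΔ]; ring
      have hpos := stmt11_pos_Ioi hfi x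
      have hchain : (∫ t in Ioi x, exp (-V t))
          ≤ exp (M - (V x - V a)) * ∫ t in Ioi x, exp (-V t) := by
        have step1 : (∫ t in Ioi x, exp (-V t))
            ≤ exp (-(V x - V a)) * ∫ t in Ioi a, exp (-V t) := by
          calc (∫ t in Ioi x, exp (-V t))
              = ∫ t in Ioi a, exp (-V (t + Δ)) := by
                rw [stmt11_shift_Ioi (fun t => exp (-V t)) a Δ, haΔ]
            _ ≤ ∫ t in Ioi a, exp (-(V x - V a)) * exp (-V t) := by
                refine setIntegral_mono_on
                  ((stmt11_shift_integrable hfi Δ).integrableOn)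
                  ((hfi.const_mul _).integrableOn) measurableSet_Ioi fun t ht => ?_
                have hinc := stmt11_convex_increment hV (le_of_lt (ht : a < t)) hΔpos.le
                rw [haΔ] at hinc
                rw [← exp_add]
                exact exp_le_exp.mpr (by linarith)
            _ = exp (-(V x - V a)) * ∫ t in Ioi a, exp (-V t) := integral_const_mul _ _
        have step2 : (∫ t in Ioi a, exp (-V t))
            ≤ exp M * ∫ t in Ioi x, exp (-V t) := by
          calc (∫ t in Ioi a, exp (-V t))
              ≤ exp M * ∫ t in Ioi a, exp (-V t - q t) :=
                stmt11_cmp_fg hq hfi hgi measurableSet_Ioi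
            _ = exp M * ∫ t in Ioi x, exp (-V t) := by rw [← hbalIoi]
        calc (∫ t in Ioi x, exp (-V t))
            ≤ exp (-(V x - V a)) * ∫ t in Ioi a, exp (-V t) := step1
          _ ≤ exp (-(V x - V a)) * (exp M * ∫ t in Ioi x, exp (-V t)) :=
              mul_le_mul_of_nonneg_left step2 (exp_pos _).le
          _ = exp (M - (V x - V a)) * ∫ t in Ioi x, exp (-V t) := by
              rw [← mul_assoc, ← exp_add]; ring_nf
      exact stmt11_absorb hpos (hexplt _ hβ) hchain
  · -- V a - V x ≤ M
    by_contra hcon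
    push_neg at hcon
    have hβ : M < V a - V x := hcon
    rcases lt_trichotomy x a with hxa | hxa | hxa
    · set Δ : ℝ := a - x with hΔ
      have hΔpos : (0:ℝ) < Δ := by simp only [hΔ]; linarith
      have hxΔ : x + Δ = a := by simp only [hΔ]; ring
      have hpos := stmt11_pos_Ioi hfi x
      have hchain : (∫ t in Ioi x, exp (-V t))
          ≤ exp (M - (V a - V x)) * ∫ t in Ioi x, exp (-V t) := by
        have step1 : (∫ t in Ioi a, exp (-V t))
            ≤ exp (-(V a - V x)) * ∫ t in Ioi x, exp (-V t) := by
          calc (∫ t in Ioi a, exp (-V t))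
              = ∫ t in Ioi x, exp (-V (t + Δ)) := by
                rw [stmt11_shift_Ioi (fun t => exp (-V t)) x Δ, hxΔ]
            _ ≤ ∫ t in Ioi x, exp (-(V a - V x)) * exp (-V t) := by
                refine setIntegral_mono_on
                  ((stmt11_shift_integrable hfi Δ).integrableOn)
                  ((hfi.const_mul _).integrableOn) measurableSet_Ioi fun t ht => ?_
                have hinc := stmt11_convex_increment hV (le_of_lt (ht : x < t)) hΔpos.le
                rw [hxΔ] at hinc
                rw [← exp_add]
                exact exp_le_exp.mpr (by linarith)
            _ = exp (-(V a - V x)) * ∫ t in Ioi x, exp (-V t) := integral_const_mul _ _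
        calc (∫ t in Ioi x, exp (-V t))
            = ∫ t in Ioi a, exp (-V t - q t) := hbalIoi
          _ ≤ exp M * ∫ t in Ioi a, exp (-V t) :=
              stmt11_cmp_gf hq hfi hgi measurableSet_Ioi
          _ ≤ exp M * (exp (-(V a - V x)) * ∫ t in Ioi x, exp (-V t)) :=
              mul_le_mul_of_nonneg_left step1 (exp_pos _).le
          _ = exp (M - (V a - V x)) * ∫ t in Ioi x, exp (-V t) := by
              rw [← mul_assoc, ← exp_add]; ring_nf
      exact stmt11_absorb hpos (hexplt _ hβ) hchain
    · rw [← hxa] at hβ; linarith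
    · set Δ : ℝ := x - a with hΔ
      have hΔpos : (0:ℝ) < Δ := by simp only [hΔ]; linarith
      have haΔ : a + Δ = x := by simp only [hΔ]; ring
      have hpos := stmt11_pos_Iic hfi a
      have hchain : (∫ t in Iic a, exp (-V t))
          ≤ exp (M - (V a - V x)) * ∫ t in Iic a, exp (-V t) := by
        have step1 : (∫ t in Iic a, exp (-V t))
            ≤ exp (-(V a - V x)) * ∫ t in Iic x, exp (-V t) := by
          calc (∫ t in Iic a, exp (-V t))
              ≤ ∫ t in Iic a, exp (-(V a - V x)) * exp (-V (t + Δ)) := by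
                refine setIntegral_mono_on hfi.integrableOn
                  (((stmt11_shift_integrable hfi Δ).const_mul _).integrableOn)
                  measurableSet_Iic fun t ht => ?_
                have hinc := stmt11_convex_increment hV (ht : t ≤ a) hΔpos.le
                rw [haΔ] at hinc
                rw [← exp_add]
                exact exp_le_exp.mpr (by linarith)
            _ = exp (-(V a - V x)) * ∫ t in Iic a, exp (-V (t + Δ)) :=
                integral_const_mul _ _
            _ = exp (-(V a - V x)) * ∫ t in Iic x, exp (-V t) := by
                rw [stmt11_shift_Iic (fun t => exp (-V t)) a Δ, haΔ]
        calc (∫ t in Iic a, exp (-V t))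
            ≤ exp (-(V a - V x)) * ∫ t in Iic x, exp (-V t) := step1
          _ = exp (-(V a - V x)) * ∫ t in Iic a, exp (-V t - q t) := by
              rw [hbal x, ← ha]
          _ ≤ exp (-(V a - V x)) * (exp M * ∫ t in Iic a, exp (-V t)) :=
              mul_le_mul_of_nonneg_left
                (stmt11_cmp_gf hq hfi hgi measurableSet_Iic) (exp_pos _).le
          _ = exp (M - (V a - V x)) * ∫ t in Iic a, exp (-V t) := by
              rw [← mul_assoc, ← exp_add]; ring_nf
      exact stmt11_absorb hpos (hexplt _ hβ) hchain
private lemma stmt11_interval_balance {V q T : ℝ → ℝ}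
    (hfi : Integrable (fun t => exp (-V t)) volume)
    (hgi : Integrable (fun t => exp (-V t - q t)) volume)
    (hbal : ∀ x, (∫ t in Iic x, exp (-V t)) = ∫ t in Iic (T x), exp (-V t - q t))
    (hT : Monotone T) {u v : ℝ} (huv : u ≤ v) :
    (∫ t in Ioc u v, exp (-V t)) = ∫ t in Ioc (T u) (T v), exp (-V t - q t) := by
  have h1 : (∫ t in Iic v, exp (-V t)) - ∫ t in Iic u, exp (-V t)
      = ∫ t in Ioc u v, exp (-V t) := by
    rw [intervalIntegral.integral_Iic_sub_Iic hfi.integrableOn hfi.integrableOn,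
      intervalIntegral.integral_of_le huv]
  have h2 : (∫ t in Iic (T v), exp (-V t - q t)) - ∫ t in Iic (T u), exp (-V t - q t)
      = ∫ t in Ioc (T u) (T v), exp (-V t - q t) := by
    rw [intervalIntegral.integral_Iic_sub_Iic hgi.integrableOn hgi.integrableOn,
      intervalIntegral.integral_of_le (hT huv)]
  linarith [hbal u, hbal v]

private lemma stmt11_upper {V q T : ℝ → ℝ} {M : ℝ} (hV : ConvexOn ℝ Set.univ V)
    (hq : ∀ t, |q t| ≤ M)
    (hfi : Integrable (fun t => exp (-V t)) volume)
    (hgi : Integrable (fun t => exp (-V t - q t)) volume)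
    (hbal : ∀ x, (∫ t in Iic x, exp (-V t)) = ∫ t in Iic (T x), exp (-V t - q t))
    (hT : Monotone T) {u v c : ℝ} (huv : u ≤ v)
    (hc : ∀ t ∈ Ioc u v, V c ≤ V t) :
    T v - T u ≤ (v - u) * exp (M + max (V (T u)) (V (T v)) - V c) := by
  have hTuv : T u ≤ T v := hT huv
  set mT : ℝ := max (V (T u)) (V (T v)) with hmT
  have hA : (∫ t in Ioc u v, exp (-V t)) ≤ (v - u) * exp (-V c) := by
    calc (∫ t in Ioc u v, exp (-V t)) ≤ ∫ _t in Ioc u v, exp (-V c) := by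
          refine setIntegral_mono_on hfi.integrableOn ?_ measurableSet_Ioc
            fun t ht => exp_le_exp.mpr (neg_le_neg (hc t ht))
          rw [integrableOn_const_iff]
          exact Or.inr (by rw [Real.volume_Ioc]; exact ENNReal.ofReal_lt_top)
      _ = (v - u) * exp (-V c) := by
          rw [setIntegral_const, Real.volume_real_Ioc_of_le (by linarith), smul_eq_mul]
  have hB : (T v - T u) * exp (-(M + mT)) ≤ ∫ t in Ioc (T u) (T v), exp (-V t - q t) := by
    calc (T v - T u) * exp (-(M + mT))
        = ∫ _t in Ioc (T u) (T v), exp (-(M + mT)) := by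
          rw [setIntegral_const, Real.volume_real_Ioc_of_le (by linarith), smul_eq_mul]
      _ ≤ ∫ t in Ioc (T u) (T v), exp (-V t - q t) := by
          refine setIntegral_mono_on ?_ hgi.integrableOn measurableSet_Ioc
            fun t ht => ?_
          · rw [integrableOn_const_iff]
            exact Or.inr (by rw [Real.volume_Ioc]; exact ENNReal.ofReal_lt_top)
          · have htIcc : t ∈ Icc (T u) (T v) := Ioc_subset_Icc_self ht
            have hmax : V t ≤ mT := by
              have := hV.le_on_segment (Set.mem_univ (T u)) (Set.mem_univ (T v))
                (by rw [segment_eq_Icc hTuv]; exact htIcc)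
              exact this
            have hqt := (abs_le.mp (hq t)).2
            exact exp_le_exp.mpr (by linarith)
  have hbalI := stmt11_interval_balance hfi hgi hbal hT huv
  have hcomb : (T v - T u) * exp (-(M + mT)) ≤ (v - u) * exp (-V c) := by
    calc (T v - T u) * exp (-(M + mT))
        ≤ ∫ t in Ioc (T u) (T v), exp (-V t - q t) := hB
      _ = ∫ t in Ioc u v, exp (-V t) := hbalI.symm
      _ ≤ (v - u) * exp (-V c) := hA
  have hmul := mul_le_mul_of_nonneg_right hcomb (exp_pos (M + mT)).le
  rw [mul_assoc, ← exp_add, neg_add_cancel, exp_zero, mul_one, mul_assoc, ← exp_add] at hmul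
  calc T v - T u ≤ (v - u) * exp (-V c + (M + mT)) := hmul
    _ = (v - u) * exp (M + mT - V c) := by ring_nf

private lemma stmt11_lower {V q T : ℝ → ℝ} {M : ℝ} (hV : ConvexOn ℝ Set.univ V)
    (hq : ∀ t, |q t| ≤ M)
    (hfi : Integrable (fun t => exp (-V t)) volume)
    (hgi : Integrable (fun t => exp (-V t - q t)) volume)
    (hbal : ∀ x, (∫ t in Iic x, exp (-V t)) = ∫ t in Iic (T x), exp (-V t - q t))
    (hT : Monotone T) {u v c' : ℝ} (huv : u ≤ v)
    (hc' : ∀ t ∈ Ioc (T u) (T v), V c' ≤ V t) :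
    (v - u) * exp (V c' - M - max (V u) (V v)) ≤ T v - T u := by
  have hTuv : T u ≤ T v := hT huv
  set mS : ℝ := max (V u) (V v) with hmS
  have hA : (v - u) * exp (-mS) ≤ ∫ t in Ioc u v, exp (-V t) := by
    calc (v - u) * exp (-mS) = ∫ _t in Ioc u v, exp (-mS) := by
          rw [setIntegral_const, Real.volume_real_Ioc_of_le (by linarith), smul_eq_mul]
      _ ≤ ∫ t in Ioc u v, exp (-V t) := by
          refine setIntegral_mono_on ?_ hfi.integrableOn measurableSet_Ioc
            fun t ht => ?_
          · rw [integrableOn_const_iff]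
            exact Or.inr (by rw [Real.volume_Ioc]; exact ENNReal.ofReal_lt_top)
          · have hmax : V t ≤ mS :=
              hV.le_on_segment (Set.mem_univ u) (Set.mem_univ v)
                (by rw [segment_eq_Icc huv]; exact Ioc_subset_Icc_self ht)
            exact exp_le_exp.mpr (by linarith)
  have hB : (∫ t in Ioc (T u) (T v), exp (-V t - q t))
      ≤ (T v - T u) * exp (M - V c') := by
    calc (∫ t in Ioc (T u) (T v), exp (-V t - q t))
        ≤ ∫ _t in Ioc (T u) (T v), exp (M - V c') := by
          refine setIntegral_mono_on hgi.integrableOn ?_ measurableSet_Ioc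
            fun t ht => ?_
          · rw [integrableOn_const_iff]
            exact Or.inr (by rw [Real.volume_Ioc]; exact ENNReal.ofReal_lt_top)
          · have hqt := (abs_le.mp (hq t)).1
            exact exp_le_exp.mpr (by linarith [hc' t ht])
      _ = (T v - T u) * exp (M - V c') := by
          rw [setIntegral_const, Real.volume_real_Ioc_of_le (by linarith), smul_eq_mul]
  have hbalI := stmt11_interval_balance hfi hgi hbal hT huv
  have hcomb : (v - u) * exp (-mS) ≤ (T v - T u) * exp (M - V c') := by
    calc (v - u) * exp (-mS) ≤ ∫ t in Ioc u v, exp (-V t) := hA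
      _ = ∫ t in Ioc (T u) (T v), exp (-V t - q t) := hbalI
      _ ≤ (T v - T u) * exp (M - V c') := hB
  have hmul := mul_le_mul_of_nonneg_right hcomb (exp_pos (-(M - V c'))).le
  rw [mul_assoc, ← exp_add, mul_assoc, ← exp_add, add_neg_cancel, exp_zero, mul_one] at hmul
  calc (v - u) * exp (V c' - M - mS) = (v - u) * exp (-mS + -(M - V c')) := by ring_nf
    _ ≤ T v - T u := hmul
private lemma stmt11_ratio {V q T : ℝ → ℝ} {M : ℝ} (hV : ConvexOn ℝ Set.univ V)
    (hM : 0 ≤ M) (hq : ∀ t, |q t| ≤ M)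
    (hfi : Integrable (fun t => exp (-V t)) volume)
    (hgi : Integrable (fun t => exp (-V t - q t)) volume)
    (htot : (∫ t, exp (-V t)) = ∫ t, exp (-V t - q t))
    (hbal : ∀ x, (∫ t in Iic x, exp (-V t)) = ∫ t in Iic (T x), exp (-V t - q t))
    (hT : Monotone T) {x y : ℝ} (hxy : x < y) {ε : ℝ} (hε : 0 < ε) :
    T y - T x ≤ exp (2*M + ε) * (y - x) ∧ exp (-(2*M + 2*ε)) * (y - x) ≤ T y - T x := by
  have hVc : Continuous V := continuousOn_univ.mp (hV.continuousOn isOpen_univ)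
  have hpt : ∀ z, |V (T z) - V z| ≤ M := stmt11_pointwise hV hM hq hfi hgi htot hbal
  have hL : 0 < y - x := by linarith
  -- uniform continuity moduli
  obtain ⟨δ₁, hδ₁pos, hδ₁⟩ := Metric.uniformContinuousOn_iff.mp
    ((isCompact_Icc (a := x) (b := y)).uniformContinuousOn_of_continuous
      hVc.continuousOn) (ε/2) (by linarith)
  obtain ⟨δ₂, hδ₂pos, hδ₂⟩ := Metric.uniformContinuousOn_iff.mp
    ((isCompact_Icc (a := T x) (b := T y)).uniformContinuousOn_of_continuous
      hVc.continuousOn) (ε/2) (by linarith)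
  set K : ℝ := exp (2*M + ε) with hK
  have hKpos : 0 < K := exp_pos _
  set δ : ℝ := min δ₁ (δ₂ / K) with hδdef
  have hδpos : 0 < δ := lt_min hδ₁pos (div_pos hδ₂pos hKpos)
  obtain ⟨n, hn⟩ := exists_nat_gt ((y - x)/δ)
  have hn0 : 0 < (n:ℝ) := lt_trans (div_pos hL hδpos) hn
  have hn0' : (n:ℝ) ≠ 0 := hn0.ne'
  set h : ℝ := (y - x)/n with hh
  have hhpos : 0 < h := div_pos hL hn0
  have hhδ : h < δ := by
    rw [hh, div_lt_iff₀ hn0]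
    calc y - x = ((y-x)/δ) * δ := by field_simp
      _ < n * δ := by exact mul_lt_mul_of_pos_right hn hδpos
      _ = δ * n := mul_comm _ _
  set P : ℕ → ℝ := fun i => x + i * h with hP
  have hPmono : ∀ i j : ℕ, i ≤ j → P i ≤ P j := by
    intro i j hij
    simp only [hP]
    have : (i:ℝ) ≤ j := Nat.cast_le.mpr hij
    nlinarith
  have hPsucc : ∀ i : ℕ, P (i+1) - P i = h := by
    intro i; simp only [hP]; push_cast; ring
  have hPn : P n = y := by
    simp only [hP, hh]; field_simp; ring
  have hP0 : P 0 = x := by simp [hP]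
  have hPmem : ∀ i : ℕ, i ≤ n → P i ∈ Icc x y := by
    intro i hi
    constructor
    · simp only [hP]
      have : (0:ℝ) ≤ (i:ℝ) * h := mul_nonneg (Nat.cast_nonneg i) hhpos.le
      linarith
    · calc P i ≤ P n := hPmono i n hi
        _ = y := hPn
  -- source oscillation bound
  have hosc : ∀ i : ℕ, i + 1 ≤ n → ∀ s t : ℝ, s ∈ Icc (P i) (P (i+1)) →
      t ∈ Icc (P i) (P (i+1)) → V s - V t < ε/2 := by
    intro i hi s t hs ht
    have hiIcc := hPmem i (by omega)
    have hi1Icc := hPmem (i+1) hi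
    have hsub : Icc (P i) (P (i+1)) ⊆ Icc x y := Icc_subset_Icc hiIcc.1 hi1Icc.2
    have hdist : dist s t < δ₁ := by
      rw [Real.dist_eq, abs_lt]
      have := hPsucc i
      constructor <;> [skip; skip] <;>
        · have h1 := hs.1; have h2 := hs.2; have h3 := ht.1; have h4 := ht.2
          have h5 : δ ≤ δ₁ := min_le_left _ _
          linarith
    have := hδ₁ s (hsub hs) t (hsub ht) hdist
    rw [Real.dist_eq] at this
    exact lt_of_le_of_lt (le_abs_self _) this
  -- upper bound per piece
  have hup : ∀ i : ℕ, i + 1 ≤ n → T (P (i+1)) - T (P i) ≤ h * K := by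
    intro i hi
    have hle : P i ≤ P (i+1) := hPmono i (i+1) (by omega)
    obtain ⟨c, hcmem, hcmin⟩ := isCompact_Icc.exists_isMinOn (nonempty_Icc.mpr hle)
      hVc.continuousOn
    have hc : ∀ t ∈ Ioc (P i) (P (i+1)), V c ≤ V t := fun t ht =>
      hcmin (Ioc_subset_Icc_self ht)
    have hub := stmt11_upper hV hq hfi hgi hbal hT hle hc
    have hexp : M + max (V (T (P i))) (V (T (P (i+1)))) - V c ≤ 2*M + ε := by
      have h1 := (abs_le.mp (hpt (P i))).2
      have h2 := (abs_le.mp (hpt (P (i+1)))).2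
      have h3 : V (P i) - V c < ε/2 := hosc i hi _ _ (left_mem_Icc.mpr hle) hcmem
      have h4 : V (P (i+1)) - V c < ε/2 := hosc i hi _ _ (right_mem_Icc.mpr hle) hcmem
      rcases max_cases (V (T (P i))) (V (T (P (i+1)))) with ⟨hm, _⟩ | ⟨hm, _⟩ <;>
        rw [hm] <;> linarith
    calc T (P (i+1)) - T (P i) ≤ (P (i+1) - P i) * exp (M + max (V (T (P i)))
          (V (T (P (i+1)))) - V c) := hub
      _ ≤ h * K := by
          rw [hPsucc i, hK]
          exact mul_le_mul_of_nonneg_left (exp_le_exp.mpr hexp) hhpos.le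
  -- lower bound per piece
  have hlo : ∀ i : ℕ, i + 1 ≤ n → h * exp (-(2*M + 2*ε)) ≤ T (P (i+1)) - T (P i) := by
    intro i hi
    have hle : P i ≤ P (i+1) := hPmono i (i+1) (by omega)
    have hTle : T (P i) ≤ T (P (i+1)) := hT hle
    obtain ⟨c', hcmem', hcmin'⟩ := isCompact_Icc.exists_isMinOn (nonempty_Icc.mpr hTle)
      hVc.continuousOn
    have hc' : ∀ t ∈ Ioc (T (P i)) (T (P (i+1))), V c' ≤ V t := fun t ht =>
      hcmin' (Ioc_subset_Icc_self ht)
    have hlb := stmt11_lower hV hq hfi hgi hbal hT hle hc'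
    -- c' is close to T (P i)
    have hTK : T (P (i+1)) - T (P i) ≤ h * K := hup i hi
    have hTsub : Icc (T (P i)) (T (P (i+1))) ⊆ Icc (T x) (T y) :=
      Icc_subset_Icc (hT (hPmem i (by omega)).1) (hT (hPmem (i+1) hi).2)
    have hdist2 : dist (T (P i)) c' < δ₂ := by
      rw [Real.dist_eq, abs_lt]
      have h1 := hcmem'.1; have h2 := hcmem'.2
      have h3 : h * K < δ * K := mul_lt_mul_of_pos_right hhδ hKpos
      have h4 : δ * K ≤ δ₂ := by
        have : δ ≤ δ₂ / K := min_le_right _ _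
        calc δ * K ≤ (δ₂ / K) * K := mul_le_mul_of_nonneg_right this hKpos.le
          _ = δ₂ := by field_simp
      constructor <;> linarith
    have hVc' : V (T (P i)) - V c' < ε/2 := by
      have := hδ₂ (T (P i)) (hTsub (left_mem_Icc.mpr hTle)) c' (hTsub hcmem') hdist2
      rw [Real.dist_eq] at this
      exact lt_of_le_of_lt (le_abs_self _) this
    have hexp : -(2*M + 2*ε) ≤ V c' - M - max (V (P i)) (V (P (i+1))) := by
      have h1 := (abs_le.mp (hpt (P i))).1
      have h2 : V (P (i+1)) - V (P i) < ε/2 :=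
        hosc i hi _ _ (right_mem_Icc.mpr hle) (left_mem_Icc.mpr hle)
      rcases max_cases (V (P i)) (V (P (i+1))) with ⟨hm, _⟩ | ⟨hm, _⟩ <;>
        rw [hm] <;> linarith
    calc h * exp (-(2*M + 2*ε)) = (P (i+1) - P i) * exp (-(2*M + 2*ε)) := by rw [hPsucc i]
      _ ≤ (P (i+1) - P i) * exp (V c' - M - max (V (P i)) (V (P (i+1)))) := by
          apply mul_le_mul_of_nonneg_left (exp_le_exp.mpr hexp)
          rw [hPsucc i]; exact hhpos.le
      _ ≤ T (P (i+1)) - T (P i) := hlb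
  -- telescoping
  have htel : T y - T x = ∑ i ∈ Finset.range n, (T (P (i+1)) - T (P i)) := by
    rw [Finset.sum_range_sub (fun i => T (P i)) n, hPn, hP0]
  constructor
  · calc T y - T x = ∑ i ∈ Finset.range n, (T (P (i+1)) - T (P i)) := htel
      _ ≤ ∑ _i ∈ Finset.range n, h * K := by
          refine Finset.sum_le_sum fun i hi => hup i ?_
          simpa using Finset.mem_range.mp hi
      _ = n * (h * K) := by rw [Finset.sum_const, Finset.card_range, nsmul_eq_mul]
      _ = K * (y - x) := by rw [hh]; field_simp
      _ = exp (2*M + ε) * (y - x) := by rw [hK]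
  · calc exp (-(2*M + 2*ε)) * (y - x) = n * (h * exp (-(2*M + 2*ε))) := by
          rw [hh]; field_simp
      _ = ∑ _i ∈ Finset.range n, h * exp (-(2*M + 2*ε)) := by
          rw [Finset.sum_const, Finset.card_range, nsmul_eq_mul]
      _ ≤ ∑ i ∈ Finset.range n, (T (P (i+1)) - T (P i)) := by
          refine Finset.sum_le_sum fun i hi => hlo i ?_
          simpa using Finset.mem_range.mp hi
      _ = T y - T x := htel.symm
private lemma stmt11_prob {W : ℝ → ℝ} (hm : Measurable W) (hpos : ∀ x, 0 ≤ W x)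
    (hp : IsProbabilityMeasure ((volume : Measure ℝ).withDensity fun x =>
      ENNReal.ofReal (W x))) :
    Integrable W volume ∧ ∫ x, W x = 1 := by
  have h1 : ∫⁻ x, ENNReal.ofReal (W x) = 1 := by
    have := hp.measure_univ
    rwa [withDensity_apply _ MeasurableSet.univ, Measure.restrict_univ] at this
  have hint : Integrable W volume := by
    refine ⟨hm.aestronglyMeasurable, ?_⟩
    rw [hasFiniteIntegral_iff_ofReal (Filter.Eventually.of_forall hpos), h1]
    exact ENNReal.one_lt_top
  refine ⟨hint, ?_⟩
  rw [integral_eq_lintegral_of_nonneg_ae (Filter.Eventually.of_forall hpos)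
    hm.aestronglyMeasurable, h1]
  simp

/-- **Remark 5.2 (linearized one-dimensional estimate).** There is a universal
constant `C > 0` such that whenever `‖q‖_∞ ≤ 1` and `T` is the monotone
transport taking `e^{-V}dx` to `e^{-V-q}dx` on the line, one has the
integrated form of `‖T' - 1‖_∞ ≤ C‖q‖_∞`:
`|T(y) - T(x) - (y - x)| ≤ C‖q‖_∞(y - x)` for all `x ≤ y`. -/
theorem stmt_11 : ∃ C : ℝ, 0 < C ∧
    ∀ (V q : ℝ → ℝ), ConvexOn ℝ Set.univ V → Measurable q →
      (∀ x, |q x| ≤ 1) →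
      IsProbabilityMeasure
        ((volume : Measure ℝ).withDensity fun x =>
          ENNReal.ofReal (Real.exp (-V x))) →
      IsProbabilityMeasure
        ((volume : Measure ℝ).withDensity fun x =>
          ENNReal.ofReal (Real.exp (-V x - q x))) →
      ∀ T : ℝ → ℝ, Monotone T →
        (∀ x : ℝ, ∫ t in Set.Iic x, Real.exp (-V t)
          = ∫ t in Set.Iic (T x), Real.exp (-V t - q t)) →
        ∀ x y : ℝ, x ≤ y →
          |T y - T x - (y - x)| ≤ C * (⨆ z, |q z|) * (y - x) := by
  refine ⟨2 * exp 2, by positivity, ?_⟩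
  intro V q hV hqm hq1 hPf hPg T hT hbal x y hxy
  set M : ℝ := ⨆ z, |q z| with hMdef
  have hbdd : BddAbove (Set.range fun z => |q z|) := ⟨1, by rintro _ ⟨z, rfl⟩; exact hq1 z⟩
  have hqM : ∀ t, |q t| ≤ M := fun t => le_ciSup hbdd t
  have hM0 : 0 ≤ M := le_trans (abs_nonneg (q 0)) (hqM 0)
  have hM1 : M ≤ 1 := ciSup_le hq1
  have hVc : Continuous V := continuousOn_univ.mp (hV.continuousOn isOpen_univ)
  have hfm : Measurable fun t => exp (-V t) := (hVc.neg.measurable).exp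
  have hgm : Measurable fun t => exp (-V t - q t) := ((hVc.measurable.neg).sub hqm).exp
  have hf := stmt11_prob hfm (fun t => (exp_pos _).le) hPf
  have hg := stmt11_prob hgm (fun t => (exp_pos _).le) hPg
  obtain ⟨hfi, hftot⟩ := hf
  obtain ⟨hgi, hgtot⟩ := hg
  have htot : (∫ t, exp (-V t)) = ∫ t, exp (-V t - q t) := by rw [hftot, hgtot]
  rcases eq_or_lt_of_le hxy with rfl | hlt
  · simp
  have hL : 0 < y - x := by linarith
  -- upper bound
  have hub : T y - T x ≤ exp (2*M) * (y - x) := by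
    by_contra hno
    push_neg at hno
    have hRpos : 0 < exp (2*M) * (y - x) := by positivity
    have hR : 1 < (T y - T x) / (exp (2*M) * (y - x)) := (one_lt_div hRpos).mpr hno
    set ε : ℝ := Real.log ((T y - T x) / (exp (2*M) * (y - x))) / 2 with hεdef
    have hlogpos := Real.log_pos hR
    have hεpos : 0 < ε := by rw [hεdef]; linarith
    have h2 := (stmt11_ratio hV hM0 hqM hfi hgi htot hbal hT hlt hεpos).1
    have hexp2ε : exp (2*ε) = (T y - T x) / (exp (2*M) * (y - x)) := by
      rw [show 2*ε = Real.log ((T y - T x) / (exp (2*M) * (y - x))) by rw [hεdef]; ring]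
      exact Real.exp_log (lt_trans one_pos hR)
    have heq : exp (2*M + 2*ε) * (y - x) = T y - T x := by
      rw [exp_add, hexp2ε]
      field_simp
    have hlt2 : exp (2*M + ε) * (y - x) < exp (2*M + 2*ε) * (y - x) :=
      mul_lt_mul_of_pos_right (exp_lt_exp.mpr (by linarith)) hL
    linarith
  -- lower bound
  have hlb : exp (-(2*M)) * (y - x) ≤ T y - T x := by
    have h1 := (stmt11_ratio hV hM0 hqM hfi hgi htot hbal hT hlt one_pos).2
    have hTpos : 0 < T y - T x :=
      lt_of_lt_of_le (by positivity) h1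
    by_contra hno
    push_neg at hno
    have hR : 1 < (exp (-(2*M)) * (y - x)) / (T y - T x) := (one_lt_div hTpos).mpr hno
    set ε : ℝ := Real.log ((exp (-(2*M)) * (y - x)) / (T y - T x)) / 4 with hεdef
    have hlogpos := Real.log_pos hR
    have hεpos : 0 < ε := by rw [hεdef]; linarith
    have h2 := (stmt11_ratio hV hM0 hqM hfi hgi htot hbal hT hlt hεpos).2
    have hexp4ε : exp (4*ε) = (exp (-(2*M)) * (y - x)) / (T y - T x) := by
      rw [show 4*ε = Real.log ((exp (-(2*M)) * (y - x)) / (T y - T x)) by rw [hεdef]; ring]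
      exact Real.exp_log (lt_trans one_pos hR)
    have hlt2 : exp (2*ε) < (exp (-(2*M)) * (y - x)) / (T y - T x) := by
      rw [← hexp4ε]
      exact exp_lt_exp.mpr (by linarith)
    have hsplit : exp (-(2*M + 2*ε)) = exp (-(2*M)) / exp (2*ε) := by
      rw [← exp_sub]; ring_nf
    have hkey : T y - T x < exp (-(2*M + 2*ε)) * (y - x) := by
      rw [hsplit]
      rw [div_mul_eq_mul_div, lt_div_iff₀ (exp_pos _)]
      calc (T y - T x) * exp (2*ε)
          < (T y - T x) * ((exp (-(2*M)) * (y - x)) / (T y - T x)) :=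
            mul_lt_mul_of_pos_left hlt2 hTpos
        _ = exp (-(2*M)) * (y - x) := by field_simp
    linarith
  -- conclude
  have hE : exp (2*M) ≤ exp 2 := exp_le_exp.mpr (by linarith)
  have h1m : 1 - 2*M ≤ exp (-(2*M)) := by
    have := Real.add_one_le_exp (-(2*M)); linarith
  have hprodexp : exp (-(2*M)) * exp (2*M) = 1 := by
    rw [← exp_add]; simp
  have h2m : exp (2*M) - 1 ≤ 2*M * exp (2*M) := by
    nlinarith [exp_pos (2*M)]
  have hE1 : (1:ℝ) ≤ exp 2 := by
    rw [← exp_zero]; exact exp_le_exp.mpr (by norm_num)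
  have s2 : (exp (2*M) - 1) * (y - x) ≤ (2*M*exp (2*M)) * (y - x) :=
    mul_le_mul_of_nonneg_right h2m hL.le
  have s3i : 2*M*exp (2*M) ≤ 2*M*exp 2 :=
    mul_le_mul_of_nonneg_left hE (by positivity)
  have s3 : (2*M*exp (2*M)) * (y - x) ≤ (2*M*exp 2) * (y - x) :=
    mul_le_mul_of_nonneg_right s3i hL.le
  have s4 : 1 - exp (-(2*M)) ≤ 2*M := by linarith
  have s5 : (1 - exp (-(2*M))) * (y - x) ≤ (2*M) * (y - x) :=
    mul_le_mul_of_nonneg_right s4 hL.le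
  have s6i : (2:ℝ)*M ≤ 2*M*exp 2 := by nlinarith
  have s6 : (2*M) * (y - x) ≤ (2*M*exp 2) * (y - x) :=
    mul_le_mul_of_nonneg_right s6i hL.le
  rw [abs_le]
  constructor
  · nlinarith
  · nlinarith
end

section
/- Let n ≥ 1 and c ≥ 0. Let T̃ : [0,∞) → [0,∞) satisfy T̃(0) = 0 and e^{-c}·(s − r) ≤ T̃(s) − T̃(r) ≤ e^{c}·(s − r) for all 0 ≤ r ≤ s. Define T : ℝⁿ → ℝⁿ by T(x) := T̃(‖x‖)·x/‖x‖ for x ≠ 0 and T(0) := 0. Then for all x, y ∈ ℝⁿ: ‖T(x) − T(y)‖ ≤ e^{c}·‖x − y‖ and ⟨T(x) − T(y), x − y⟩ ≥ e^{-c}·‖x − y‖². -/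
open Real
open scoped InnerProductSpace

set_option maxHeartbeats 1000000 in
/-- **Lifting of the bi-Lipschitz bounds in the proof of Theorem 1.3.** If the
one-dimensional profile `T̃` fixes the origin and is bi-Lipschitz with
constants `e^{-c}` and `e^{c}` on `[0, ∞)`, then the induced radial map
`T(x) = T̃(‖x‖)·x/‖x‖` is `e^{c}`-Lipschitz and `e^{-c}`-strongly monotone. -/
theorem stmt_14 (n : ℕ) (hn : 1 ≤ n) (c : ℝ) (hc : 0 ≤ c)
    (Tt : ℝ → ℝ) (hT0 : Tt 0 = 0)
    (hbi : ∀ r s : ℝ, 0 ≤ r → r ≤ s →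
      Real.exp (-c) * (s - r) ≤ Tt s - Tt r ∧
        Tt s - Tt r ≤ Real.exp c * (s - r))
    (T : EuclideanSpace ℝ (Fin n) → EuclideanSpace ℝ (Fin n))
    (hTzero : T 0 = 0)
    (hT : ∀ x : EuclideanSpace ℝ (Fin n), x ≠ 0 →
      T x = (Tt ‖x‖ / ‖x‖) • x) :
    ∀ x y : EuclideanSpace ℝ (Fin n),
      ‖T x - T y‖ ≤ Real.exp c * ‖x - y‖ ∧
        Real.exp (-c) * ‖x - y‖ ^ 2 ≤ ⟪T x - T y, x - y⟫_ℝ := by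
  have hE : (0:ℝ) < Real.exp c := Real.exp_pos c
  have hE' : (0:ℝ) < Real.exp (-c) := Real.exp_pos _
  have hpos : ∀ r : ℝ, 0 ≤ r →
      Real.exp (-c) * r ≤ Tt r ∧ Tt r ≤ Real.exp c * r := by
    intro r hr
    have := hbi 0 r le_rfl hr
    simpa [hT0] using this
  have hmono : ∀ r s : ℝ, 0 ≤ r → 0 ≤ s →
      Real.exp (-c) * (s - r) ^ 2 ≤ (Tt s - Tt r) * (s - r) := by
    intro r s hr hs
    rcases le_total r s with h | h
    · have h1 := (hbi r s hr h).1
      nlinarith [sub_nonneg.2 h]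
    · have h1 := (hbi s r hs h).1
      nlinarith [sub_nonneg.2 h]
  have hlipsq : ∀ r s : ℝ, 0 ≤ r → 0 ≤ s →
      (Tt s - Tt r) ^ 2 ≤ (Real.exp c) ^ 2 * (s - r) ^ 2 := by
    intro r s hr hs
    rcases le_total r s with h | h
    · have h1 := (hbi r s hr h).1
      have h2 := (hbi r s hr h).2
      have hd : (0:ℝ) ≤ s - r := sub_nonneg.2 h
      nlinarith [mul_nonneg hE'.le hd]
    · have h1 := (hbi s r hs h).1
      have h2 := (hbi s r hs h).2
      have hd : (0:ℝ) ≤ r - s := sub_nonneg.2 h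
      nlinarith [mul_nonneg hE'.le hd]
  have hT' : ∀ x : EuclideanSpace ℝ (Fin n), T x = (Tt ‖x‖ / ‖x‖) • x := by
    intro x
    by_cases h : x = 0
    · subst h; simp [hTzero, hT0]
    · exact hT x h
  intro x y
  have ha0 : (0:ℝ) ≤ ‖x‖ := norm_nonneg x
  have hb0 : (0:ℝ) ≤ ‖y‖ := norm_nonneg y
  have hFa := hpos ‖x‖ ha0
  have hFb := hpos ‖y‖ hb0
  have hF0 : 0 ≤ Tt ‖x‖ := le_trans (mul_nonneg hE'.le ha0) hFa.1
  have hG0 : 0 ≤ Tt ‖y‖ := le_trans (mul_nonneg hE'.le hb0) hFb.1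
  have habt : ⟪x, y⟫_ℝ ≤ ‖x‖ * ‖y‖ := real_inner_le_norm x y
  have habt' : (0:ℝ) ≤ ‖x‖ * ‖y‖ - ⟪x, y⟫_ℝ := sub_nonneg.2 habt
  have hαa : Tt ‖x‖ / ‖x‖ * ‖x‖ = Tt ‖x‖ := by
    rcases eq_or_ne (‖x‖) 0 with h | h
    · rw [h, hT0]; simp
    · field_simp
  have hβb : Tt ‖y‖ / ‖y‖ * ‖y‖ = Tt ‖y‖ := by
    rcases eq_or_ne (‖y‖) 0 with h | h
    · rw [h, hT0]; simp
    · field_simp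
  have hxt0 : ‖x‖ = 0 → ⟪x, y⟫_ℝ = 0 := by
    intro h
    have hx : x = 0 := norm_eq_zero.1 h
    simp [hx]
  have hyt0 : ‖y‖ = 0 → ⟪x, y⟫_ℝ = 0 := by
    intro h
    have hy : y = 0 := norm_eq_zero.1 h
    simp [hy]
  have hcross1a : Real.exp (-c) * (‖x‖ * ‖y‖ - ⟪x, y⟫_ℝ)
      ≤ Tt ‖x‖ / ‖x‖ * (‖x‖ * ‖y‖ - ⟪x, y⟫_ℝ) := by
    rcases eq_or_ne (‖x‖) 0 with h | h
    · rw [h, hxt0 h]; simp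
    · have hap : 0 < ‖x‖ := lt_of_le_of_ne ha0 (Ne.symm h)
      exact mul_le_mul_of_nonneg_right ((le_div_iff₀ hap).2 hFa.1) habt'
  have hcross1b : Real.exp (-c) * (‖x‖ * ‖y‖ - ⟪x, y⟫_ℝ)
      ≤ Tt ‖y‖ / ‖y‖ * (‖x‖ * ‖y‖ - ⟪x, y⟫_ℝ) := by
    rcases eq_or_ne (‖y‖) 0 with h | h
    · rw [h, hyt0 h]; simp
    · have hbp : 0 < ‖y‖ := lt_of_le_of_ne hb0 (Ne.symm h)
      exact mul_le_mul_of_nonneg_right ((le_div_iff₀ hbp).2 hFb.1) habt'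
  have hcross2 : Tt ‖x‖ / ‖x‖ * (Tt ‖y‖ / ‖y‖) * (‖x‖ * ‖y‖ - ⟪x, y⟫_ℝ)
      ≤ Real.exp c * Real.exp c * (‖x‖ * ‖y‖ - ⟪x, y⟫_ℝ) := by
    rcases eq_or_ne (‖x‖) 0 with h | h
    · rw [h, hxt0 h]; simp [hT0]
    rcases eq_or_ne (‖y‖) 0 with h' | h'
    · rw [h', hyt0 h']; simp [hT0]
    · have hap : 0 < ‖x‖ := lt_of_le_of_ne ha0 (Ne.symm h)
      have hbp : 0 < ‖y‖ := lt_of_le_of_ne hb0 (Ne.symm h')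
      have hα2 : Tt ‖x‖ / ‖x‖ ≤ Real.exp c := (div_le_iff₀ hap).2 hFa.2
      have hβ2 : Tt ‖y‖ / ‖y‖ ≤ Real.exp c := (div_le_iff₀ hbp).2 hFb.2
      exact mul_le_mul_of_nonneg_right
        (mul_le_mul hα2 hβ2 (div_nonneg hG0 hb0) hE.le) habt'
  have hnorm : ‖(Tt ‖x‖ / ‖x‖) • x - (Tt ‖y‖ / ‖y‖) • y‖ ^ 2
      = (Tt ‖x‖ / ‖x‖ * ‖x‖) ^ 2
        - 2 * (Tt ‖x‖ / ‖x‖ * (Tt ‖y‖ / ‖y‖)) * ⟪x, y⟫_ℝ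
        + (Tt ‖y‖ / ‖y‖ * ‖y‖) ^ 2 := by
    rw [@norm_sub_sq_real]
    simp only [norm_smul, real_inner_smul_left, real_inner_smul_right,
      Real.norm_eq_abs, mul_pow, sq_abs]
    ring
  have hnormxy : ‖x - y‖ ^ 2 = ‖x‖ ^ 2 - 2 * ⟪x, y⟫_ℝ + ‖y‖ ^ 2 := by
    rw [@norm_sub_sq_real]
  have hinner : ⟪(Tt ‖x‖ / ‖x‖) • x - (Tt ‖y‖ / ‖y‖) • y, x - y⟫_ℝ
      = (Tt ‖x‖ / ‖x‖ * ‖x‖) * ‖x‖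
        - (Tt ‖x‖ / ‖x‖ + Tt ‖y‖ / ‖y‖) * ⟪x, y⟫_ℝ
        + (Tt ‖y‖ / ‖y‖ * ‖y‖) * ‖y‖ := by
    simp only [inner_sub_left, inner_sub_right, real_inner_smul_left,
      real_inner_self_eq_norm_sq, real_inner_comm y x]
    ring
  rw [hT' x, hT' y]
  constructor
  · have hkey := hlipsq ‖x‖ ‖y‖ ha0 hb0
    have hA : (Tt ‖x‖ / ‖x‖ * ‖x‖) ^ 2 = Tt ‖x‖ ^ 2 := by rw [hαa]
    have hB : (Tt ‖y‖ / ‖y‖ * ‖y‖) ^ 2 = Tt ‖y‖ ^ 2 := by rw [hβb]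
    have hFG : Tt ‖x‖ * Tt ‖y‖
        = Tt ‖x‖ / ‖x‖ * (Tt ‖y‖ / ‖y‖) * (‖x‖ * ‖y‖) := by
      rcases eq_or_ne (‖x‖) 0 with h | h
      · simp [h, hT0]
      rcases eq_or_ne (‖y‖) 0 with h' | h'
      · simp [h', hT0]
      · field_simp
        try ring
    have hsq : ‖(Tt ‖x‖ / ‖x‖) • x - (Tt ‖y‖ / ‖y‖) • y‖ ^ 2
        ≤ (Real.exp c * ‖x - y‖) ^ 2 := by
      calc ‖(Tt ‖x‖ / ‖x‖) • x - (Tt ‖y‖ / ‖y‖) • y‖ ^ 2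
          = (Tt ‖x‖ / ‖x‖ * ‖x‖) ^ 2
            - 2 * (Tt ‖x‖ / ‖x‖ * (Tt ‖y‖ / ‖y‖)) * ⟪x, y⟫_ℝ
            + (Tt ‖y‖ / ‖y‖ * ‖y‖) ^ 2 := hnorm
        _ ≤ (Real.exp c) ^ 2 * (‖x‖ ^ 2 - 2 * ⟪x, y⟫_ℝ + ‖y‖ ^ 2) := by
            nlinarith [hcross2, hA, hB, hFG, hkey]
        _ = (Real.exp c * ‖x - y‖) ^ 2 := by rw [mul_pow, hnormxy]
    have h1 := Real.sqrt_le_sqrt hsq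
    rwa [Real.sqrt_sq (norm_nonneg _),
      Real.sqrt_sq (by positivity)] at h1
  · rw [hinner, hnormxy, hαa, hβb]
    have hkey := hmono ‖x‖ ‖y‖ ha0 hb0
    have hFb' : Tt ‖x‖ * ‖y‖ = Tt ‖x‖ / ‖x‖ * (‖x‖ * ‖y‖) := by
      rcases eq_or_ne (‖x‖) 0 with h | h
      · simp [h, hT0]
      · field_simp
        try ring
    have hGa' : Tt ‖y‖ * ‖x‖ = Tt ‖y‖ / ‖y‖ * (‖x‖ * ‖y‖) := by
      rcases eq_or_ne (‖y‖) 0 with h | h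
      · simp [h, hT0]
      · field_simp
        try ring
    nlinarith [hcross1a, hcross1b]
end

section
/- Let E be a real inner product space and let T : E → E be a monotone map, i.e. ⟨x − y, T(x) − T(y)⟩ ≥ 0 for all x, y ∈ E. Let P > 0 and let x₀ ∈ E be a point with T(x₀) ≠ x₀. Set x̄ := x₀ + 3P·(T(x₀) − x₀)/‖T(x₀) − x₀‖. Then for every y ∈ E with ‖y − x̄‖ ≤ P one has ‖T(y) − x₀‖ ≥ (2√2/3)·‖T(x₀) − x₀‖. -/
set_option maxHeartbeats 1000000


open Real
open scoped InnerProductSpace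

/-- **Geometric lemma in the proof of Lemma 4.1.** If a monotone map `T`
displaces `x₀` by distance `d = ‖T(x₀) - x₀‖`, then every point of the ball of
radius `P` centered at the point `x̄` lying at distance `3P` from `x₀` in the
displacement direction is mapped at distance at least `(2√2/3)·d` from
`x₀`. -/
theorem stmt_15 {E : Type*} [NormedAddCommGroup E] [InnerProductSpace ℝ E]
    (T : E → E) (hmono : ∀ x y : E, 0 ≤ ⟪x - y, T x - T y⟫_ℝ)
    (P : ℝ) (hP : 0 < P) (x₀ : E) (hx₀ : T x₀ ≠ x₀) :
    ∀ y : E,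
      ‖y - (x₀ + (3 * P / ‖T x₀ - x₀‖) • (T x₀ - x₀))‖ ≤ P →
        2 * Real.sqrt 2 / 3 * ‖T x₀ - x₀‖ ≤ ‖T y - x₀‖ := by
  intro y hy
  set b : E := T x₀ - x₀ with hb
  have hd : 0 < ‖b‖ := by
    rw [norm_pos_iff, hb, sub_ne_zero]; exact hx₀
  set d : ℝ := ‖b‖ with hdd
  set a : E := y - x₀ with ha
  set v : E := T y - x₀ with hv
  set A : ℝ := ‖a‖ with hA
  have hA0 : 0 ≤ A := norm_nonneg _
  -- monotonicity
  have hmon : ⟪a, b⟫_ℝ ≤ ⟪a, v⟫_ℝ := by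
    have h1 := hmono y x₀
    have h2 : T y - T x₀ = v - b := by rw [hv, hb]; abel
    rw [h2, inner_sub_right] at h1
    linarith
  -- Cauchy-Schwarz
  have cs1 : ⟪a, b⟫_ℝ ≤ A * d := real_inner_le_norm a b
  have cs2 : ⟪a, v⟫_ℝ ≤ A * ‖v‖ := real_inner_le_norm a v
  set s : ℝ := ⟪a, b⟫_ℝ / d with hs
  have hsd : ⟪a, b⟫_ℝ = s * d := by rw [hs]; field_simp [hd.ne']
  -- ball condition
  have hball : A ^ 2 ≤ 6 * P * s - 8 * P ^ 2 := by
    have e1 : y - (x₀ + (3 * P / d) • b) = a - (3 * P / d) • b := by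
      rw [ha]; abel
    have e2 : ‖a - (3 * P / d) • b‖ ^ 2 =
        A ^ 2 - 2 * ⟪a, (3 * P / d) • b⟫_ℝ + ‖(3 * P / d) • b‖ ^ 2 := by
      rw [hA]; exact norm_sub_sq_real a _
    have e3 : ⟪a, (3 * P / d) • b⟫_ℝ = (3 * P / d) * (s * d) := by
      rw [real_inner_smul_right, hsd]
    have e4 : ‖(3 * P / d) • b‖ = 3 * P := by
      rw [norm_smul, Real.norm_eq_abs, abs_of_nonneg (by positivity)]
      field_simp
      exact hdd.symm
    have h5 : ‖y - (x₀ + (3 * P / d) • b)‖ ^ 2 ≤ P ^ 2 := by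
      have := norm_nonneg (y - (x₀ + (3 * P / d) • b))
      nlinarith [hy]
    rw [e1, e2, e3, e4] at h5
    have hdne : d ≠ 0 := ne_of_gt hd
    have e5 : 3 * P / d * (s * d) = 3 * P * s := by field_simp
    rw [e5] at h5
    nlinarith [h5]
  have hspos : 0 < s := by nlinarith [sq_nonneg A]
  have hApos : 0 < A := by
    have : s ≤ A := by
      rw [hs]; rw [div_le_iff₀ hd]; exact cs1
    linarith
  -- key: (2√2/3) A ≤ s
  have hsq2 : Real.sqrt 2 ^ 2 = 2 := Real.sq_sqrt (by norm_num)
  have hsq2n : 0 ≤ Real.sqrt 2 := Real.sqrt_nonneg 2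
  have h9 : 8 * A ^ 2 ≤ 9 * s ^ 2 := by nlinarith [sq_nonneg (3 * s - 8 * P)]
  have hkey : 2 * Real.sqrt 2 / 3 * A ≤ s := by
    have hfac : 0 < 3 * s + 2 * Real.sqrt 2 * A := by
      have := mul_nonneg hsq2n hA0
      linarith
    have hexp : (3 * s - 2 * Real.sqrt 2 * A) * (3 * s + 2 * Real.sqrt 2 * A)
        = 9 * s ^ 2 - 8 * A ^ 2 := by
      linear_combination (-4 * A ^ 2) * hsq2
    have hprod : 0 ≤ (3 * s - 2 * Real.sqrt 2 * A) * (3 * s + 2 * Real.sqrt 2 * A) := by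
      rw [hexp]; linarith
    have h7 : 0 ≤ 3 * s - 2 * Real.sqrt 2 * A := by
      by_contra h
      push_neg at h
      nlinarith [mul_neg_of_neg_of_pos h hfac]
    linarith
  -- conclude
  have hchain : 2 * Real.sqrt 2 / 3 * A * d ≤ A * ‖v‖ := by
    calc 2 * Real.sqrt 2 / 3 * A * d ≤ s * d := by
          exact mul_le_mul_of_nonneg_right hkey hd.le
    _ = ⟪a, b⟫_ℝ := hsd.symm
    _ ≤ ⟪a, v⟫_ℝ := hmon
    _ ≤ A * ‖v‖ := cs2
  by_contra h
  push_neg at h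
  nlinarith [hchain, mul_lt_mul_of_pos_left h hApos]
end

section
/- Let V : ℝ → ℝ and q : ℝ → ℝ be measurable with q bounded, such that e^{-V(x)}dx and e^{-V(x)−q(x)}dx are probability measures on ℝ. Define Φ(x) := ∫_{-∞}^{x} e^{-V(t)}dt and Ψ(x) := ∫_{x}^{∞} e^{-V(t)}dt. Suppose T : ℝ → ℝ satisfies ∫_{-∞}^{x} e^{-V(t)}dt = ∫_{-∞}^{T(x)} e^{-V(t)−q(t)}dt for every x ∈ ℝ. Then for every x ∈ ℝ: −‖q⁺‖_{L∞(ℝ)} ≤ log Φ(x) − log Φ(T(x)) ≤ ‖q⁻‖_{L∞(ℝ)} and −‖q⁺‖_{L∞(ℝ)} ≤ log Ψ(x) − log Ψ(T(x)) ≤ ‖q⁻‖_{L∞(ℝ)}. -/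
open MeasureTheory Real

/-- **Estimates (5.7)–(5.8) in the proof of Theorem 1.2.** If `T` satisfies
the mass-balance relation between `e^{-V}dx` and `e^{-V-q}dx` on the line,
then the cumulative distribution functions `Φ` and `Ψ` of `e^{-V}dx` satisfy
`-‖q⁺‖_∞ ≤ log Φ(x) - log Φ(T(x)) ≤ ‖q⁻‖_∞` and
`-‖q⁺‖_∞ ≤ log Ψ(x) - log Ψ(T(x)) ≤ ‖q⁻‖_∞`. -/
theorem stmt_17 (V q : ℝ → ℝ) (hV : Measurable V) (hq : Measurable q)
    (hqbdd : ∃ M, ∀ x, |q x| ≤ M)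
    (hμ : IsProbabilityMeasure
      ((volume : Measure ℝ).withDensity fun x =>
        ENNReal.ofReal (Real.exp (-V x))))
    (hν : IsProbabilityMeasure
      ((volume : Measure ℝ).withDensity fun x =>
        ENNReal.ofReal (Real.exp (-V x - q x))))
    (T : ℝ → ℝ)
    (hbal : ∀ x : ℝ, ∫ t in Set.Iic x, Real.exp (-V t)
      = ∫ t in Set.Iic (T x), Real.exp (-V t - q t)) :
    ∀ x : ℝ,
      (-(⨆ z, max (q z) 0) ≤
          Real.log (∫ t in Set.Iic x, Real.exp (-V t)) -
            Real.log (∫ t in Set.Iic (T x), Real.exp (-V t)) ∧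
        Real.log (∫ t in Set.Iic x, Real.exp (-V t)) -
            Real.log (∫ t in Set.Iic (T x), Real.exp (-V t)) ≤
          ⨆ z, max (-q z) 0) ∧
      (-(⨆ z, max (q z) 0) ≤
          Real.log (∫ t in Set.Ici x, Real.exp (-V t)) -
            Real.log (∫ t in Set.Ici (T x), Real.exp (-V t)) ∧
        Real.log (∫ t in Set.Ici x, Real.exp (-V t)) -
            Real.log (∫ t in Set.Ici (T x), Real.exp (-V t)) ≤
          ⨆ z, max (-q z) 0) := by
  obtain ⟨M, hM⟩ := hqbdd
  set A := ⨆ z, max (q z) 0 with hAdef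
  set B := ⨆ z, max (-q z) 0 with hBdef
  have hbddA : BddAbove (Set.range fun z => max (q z) 0) := by
    refine ⟨max M 0, ?_⟩
    rintro _ ⟨z, rfl⟩
    have := abs_le.1 (hM z)
    exact max_le_max this.2 le_rfl
  have hbddB : BddAbove (Set.range fun z => max (-q z) 0) := by
    refine ⟨max M 0, ?_⟩
    rintro _ ⟨z, rfl⟩
    have := abs_le.1 (hM z)
    exact max_le_max (by linarith [this.1]) le_rfl
  have hqA : ∀ z, q z ≤ A := fun z => (le_max_left _ _).trans (le_ciSup hbddA z)
  have hqB : ∀ z, -q z ≤ B := fun z => (le_max_left _ _).trans (le_ciSup hbddB z)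
  have hVmeas : Measurable fun t => Real.exp (-V t) := hV.neg.exp
  have hWmeas : Measurable fun t => Real.exp (-V t - q t) := (hV.neg.sub hq).exp
  have hμ1 : ∫⁻ x, ENNReal.ofReal (Real.exp (-V x)) = 1 := by
    have h := hμ.measure_univ
    rwa [withDensity_apply _ MeasurableSet.univ, setLIntegral_univ] at h
  have hν1 : ∫⁻ x, ENNReal.ofReal (Real.exp (-V x - q x)) = 1 := by
    have h := hν.measure_univ
    rwa [withDensity_apply _ MeasurableSet.univ, setLIntegral_univ] at h
  have hfint : Integrable (fun t => Real.exp (-V t)) := by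
    refine ⟨hVmeas.aestronglyMeasurable, ?_⟩
    rw [hasFiniteIntegral_iff_ofReal (ae_of_all _ fun t => (Real.exp_pos _).le), hμ1]
    exact ENNReal.one_lt_top
  have hgint : Integrable (fun t => Real.exp (-V t - q t)) := by
    refine ⟨hWmeas.aestronglyMeasurable, ?_⟩
    rw [hasFiniteIntegral_iff_ofReal (ae_of_all _ fun t => (Real.exp_pos _).le), hν1]
    exact ENNReal.one_lt_top
  have hIf : ∫ t, Real.exp (-V t) = 1 := by
    rw [integral_eq_lintegral_of_nonneg_ae (ae_of_all _ fun t => (Real.exp_pos _).le)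
      hVmeas.aestronglyMeasurable, hμ1, ENNReal.toReal_one]
  have hIg : ∫ t, Real.exp (-V t - q t) = 1 := by
    rw [integral_eq_lintegral_of_nonneg_ae (ae_of_all _ fun t => (Real.exp_pos _).le)
      hWmeas.aestronglyMeasurable, hν1, ENNReal.toReal_one]
  -- positivity of Φ and Ψ
  have hpos : ∀ (s : Set ℝ), MeasurableSet s → 0 < volume s →
      0 < ∫ t in s, Real.exp (-V t) := by
    intro s hs hvs
    rw [setIntegral_pos_iff_support_of_nonneg_ae (ae_of_all _ fun t => (Real.exp_pos _).le)
      hfint.integrableOn]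
    have hsupp : Function.support (fun t => Real.exp (-V t)) = Set.univ := by
      ext t; simp [Function.support, (Real.exp_pos (-V t)).ne']
    rwa [hsupp, Set.univ_inter]
  -- sandwich estimate on any set
  have hsand : ∀ (s : Set ℝ),
      Real.exp (-A) * ∫ t in s, Real.exp (-V t) ≤ (∫ t in s, Real.exp (-V t - q t)) ∧
      (∫ t in s, Real.exp (-V t - q t)) ≤ Real.exp B * ∫ t in s, Real.exp (-V t) := by
    intro s
    have hsplit : ∀ t : ℝ, Real.exp (-V t - q t) = Real.exp (-V t) * Real.exp (-q t) := by
      intro t; rw [← Real.exp_add]; ring_nf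
    constructor
    · rw [← integral_const_mul]
      refine setIntegral_mono (hfint.const_mul _).integrableOn hgint.integrableOn fun t => ?_
      rw [hsplit t, mul_comm (Real.exp (-A))]
      exact mul_le_mul_of_nonneg_left (Real.exp_le_exp.2 (neg_le_neg (hqA t)))
        (Real.exp_pos _).le
    · rw [← integral_const_mul]
      refine setIntegral_mono hgint.integrableOn (hfint.const_mul _).integrableOn fun t => ?_
      rw [hsplit t, mul_comm (Real.exp B)]
      refine mul_le_mul_of_nonneg_left (Real.exp_le_exp.2 ?_) (Real.exp_pos _).le
      linarith [hqB t]
  -- log estimate from sandwich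
  have hlog : ∀ a b : ℝ, 0 < b → Real.exp (-A) * b ≤ a → a ≤ Real.exp B * b →
      -A ≤ Real.log a - Real.log b ∧ Real.log a - Real.log b ≤ B := by
    intro a b hb h1 h2
    have ha : 0 < a := lt_of_lt_of_le (by positivity) h1
    constructor
    · have h3 : Real.log (Real.exp (-A) * b) ≤ Real.log a := by
        apply Real.log_le_log (by positivity) h1
      rw [Real.log_mul (Real.exp_ne_zero _) hb.ne', Real.log_exp] at h3
      linarith
    · have h3 : Real.log a ≤ Real.log (Real.exp B * b) := by
        apply Real.log_le_log ha h2
      rw [Real.log_mul (Real.exp_ne_zero _) hb.ne', Real.log_exp] at h3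
      linarith
  -- complement relations
  have hcompl : ∀ (f : ℝ → ℝ), Integrable f → ∀ y : ℝ,
      (∫ t in Set.Ici y, f t) = (∫ t, f t) - ∫ t in Set.Iic y, f t := by
    intro f hf y
    have h1 : (∫ t in Set.Iic y, f t) + ∫ t in (Set.Iic y)ᶜ, f t = ∫ t, f t :=
      integral_add_compl measurableSet_Iic hf
    rw [Set.compl_Iic] at h1
    rw [← integral_Ici_eq_integral_Ioi] at h1
    linarith
  intro x
  have hbx := hbal x
  -- Φ part
  have hbpos : 0 < ∫ t in Set.Iic (T x), Real.exp (-V t) := by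
    refine hpos _ measurableSet_Iic ?_
    rw [Real.volume_Iic]; exact ENNReal.zero_lt_top
  obtain ⟨h1, h2⟩ := hsand (Set.Iic (T x))
  refine ⟨hlog _ _ hbpos (by rw [hbx]; exact h1) (by rw [hbx]; exact h2), ?_⟩
  -- Ψ part
  have hbpos' : 0 < ∫ t in Set.Ici (T x), Real.exp (-V t) := by
    refine hpos _ measurableSet_Ici ?_
    rw [Real.volume_Ici]; exact ENNReal.zero_lt_top
  have key : (∫ t in Set.Ici x, Real.exp (-V t))
      = ∫ t in Set.Ici (T x), Real.exp (-V t - q t) := by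
    rw [hcompl _ hfint x, hcompl _ hgint (T x), hIf, hIg, hbx]
  obtain ⟨h1', h2'⟩ := hsand (Set.Ici (T x))
  exact hlog _ _ hbpos' (by rw [key]; exact h1') (by rw [key]; exact h2')
end
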